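/- arXiv:1812.11681 — 12 statements merged into one kernel-verified Lean document; each statement's English description precedes it below -/
import Mathlib

section
/- Let n ≥ 2 be an integer and let z_1,…,z_{n−2}, s_1,…,s_{n−1}, a_1 be complex numbers. Set z_0 = s_0 = s_n = 0 and z_{n−1} = −a_1, and for 1 ≤ k ≤ n−1 define α_k = ((z_{k−1}+s_k+a_1)(z_k+s_k)) / ((s_{k−1}−s_k−a_1)(s_k−s_{k+1}−a_1)). Assume s_{k−1}−s_k−a_1 ≠ 0 for all 1 ≤ k ≤ n. Then Σ_{μ ∈ U_{n−1}} Π_{k ∈ I_μ} α_k = 0. -/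
open Finset

/-- `U_m`: binary tuples (as Boolean tuples) of length `m` with no two adjacent 1's. -/
def NoTwoAdjOnes {m : ℕ} (μ : Fin m → Bool) : Prop :=
  ∀ i j : Fin m, (j : ℕ) = (i : ℕ) + 1 → ¬(μ i = true ∧ μ j = true)

instance {m : ℕ} : DecidablePred (NoTwoAdjOnes (m := m)) := fun _ => by
  unfold NoTwoAdjOnes; infer_instance

lemma NTA_iff {m : ℕ} (μ : Fin m → Bool) :
    NoTwoAdjOnes μ ↔ ∀ i : ℕ, ∀ h : i + 1 < m,
      ¬(μ ⟨i, Nat.lt_of_succ_lt h⟩ = true ∧ μ ⟨i+1, h⟩ = true) := by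
  constructor
  · intro H i h
    exact H ⟨i, Nat.lt_of_succ_lt h⟩ ⟨i+1, h⟩ rfl
  · intro H i j hij
    obtain ⟨iv, hi⟩ := i
    obtain ⟨jv, hj⟩ := j
    simp only [] at hij
    subst hij
    exact H iv hj

lemma cons_mk_succ {m : ℕ} (x : Bool) (p : Fin m → Bool) (i : ℕ) (h : i+1 < m+1) :
    (Fin.cons x p : Fin (m+1) → Bool) ⟨i+1, h⟩ = p ⟨i, Nat.lt_of_succ_lt_succ h⟩ := by
  have : (⟨i+1, h⟩ : Fin (m+1)) = Fin.succ ⟨i, Nat.lt_of_succ_lt_succ h⟩ := rfl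
  rw [this, Fin.cons_succ]

lemma cons_mk_zero {m : ℕ} (x : Bool) (p : Fin m → Bool) (h : 0 < m+1) :
    (Fin.cons x p : Fin (m+1) → Bool) ⟨0, h⟩ = x := rfl

lemma nta_cons_false {m : ℕ} (ν : Fin m → Bool) :
    NoTwoAdjOnes (Fin.cons false ν) ↔ NoTwoAdjOnes ν := by
  rw [NTA_iff, NTA_iff]
  constructor
  · intro H i h
    have := H (i+1) (by omega)
    simpa [cons_mk_succ] using this
  · intro H i h
    match i with
    | 0 => simp [cons_mk_zero]
    | (i'+1) =>
      have := H i' (by omega)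
      simpa [cons_mk_succ] using this

lemma nta_tt {m : ℕ} (ρ : Fin m → Bool) :
    ¬ NoTwoAdjOnes (Fin.cons true (Fin.cons true ρ)) := by
  rw [NTA_iff]
  intro H
  have := H 0 (by omega)
  simp [cons_mk_zero, cons_mk_succ] at this

lemma nta_tf {m : ℕ} (ρ : Fin m → Bool) :
    NoTwoAdjOnes (Fin.cons true (Fin.cons false ρ)) ↔ NoTwoAdjOnes ρ := by
  rw [NTA_iff, NTA_iff]
  constructor
  · intro H i h
    have := H (i+2) (by omega)
    simpa [cons_mk_succ] using this
  · intro H i h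
    match i with
    | 0 => simp [cons_mk_zero, cons_mk_succ]
    | 1 => simp [cons_mk_succ, cons_mk_zero]
    | (i'+2) =>
      have := H i' (by omega)
      simpa [cons_mk_succ] using this

lemma nta_zero (μ : Fin 0 → Bool) : NoTwoAdjOnes μ := by
  intro i; exact i.elim0

lemma nta_one (μ : Fin 1 → Bool) : NoTwoAdjOnes μ := by
  rw [NTA_iff]; intro i h; omega

/-- indicator-form sum -/
noncomputable def Ssum' (α : ℕ → ℂ) (m : ℕ) : ℂ :=
  ∑ μ : Fin m → Bool, (if NoTwoAdjOnes μ then (1:ℂ) else 0) *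
    ∏ i : Fin m, (if μ i = true then α (i : ℕ) else 1)

lemma sum_peel {m : ℕ} (f : (Fin (m+1) → Bool) → ℂ) :
    ∑ μ : Fin (m+1) → Bool, f μ
      = (∑ ν : Fin m → Bool, f (Fin.cons false ν)) +
        ∑ ν : Fin m → Bool, f (Fin.cons true ν) := by
  rw [← Equiv.sum_comp (Fin.consEquiv (fun _ : Fin (m+1) => Bool)) f]
  rw [Fintype.sum_prod_type]
  rw [Fintype.sum_bool]
  simp [Fin.consEquiv, add_comm]

lemma prod_peel {m : ℕ} (b : Bool) (ν : Fin m → Bool) (α : ℕ → ℂ) :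
    ∏ i : Fin (m+1), (if (Fin.cons b ν : Fin (m+1) → Bool) i = true then α (i : ℕ) else 1)
      = (if b = true then α 0 else 1) *
        ∏ i : Fin m, (if ν i = true then α ((i : ℕ)+1) else 1) := by
  rw [Fin.prod_univ_succ]
  simp [Fin.cons_succ]

lemma Ssum'_zero (α : ℕ → ℂ) : Ssum' α 0 = 1 := by
  rw [Ssum']
  simp [nta_zero]

lemma Ssum'_one (α : ℕ → ℂ) : Ssum' α 1 = 1 + α 0 := by
  rw [Ssum', sum_peel]
  simp [nta_one, prod_peel]

lemma Ssum'_rec (m : ℕ) (α : ℕ → ℂ) :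
    Ssum' α (m+2) = Ssum' (fun k => α (k+1)) (m+1)
      + α 0 * Ssum' (fun k => α (k+2)) m := by
  rw [Ssum', sum_peel]
  congr 1
  · rw [Ssum']
    refine Finset.sum_congr rfl (fun ν _ => ?_)
    simp only [nta_cons_false, prod_peel]
    simp
  · rw [sum_peel]
    have h2 : (∑ ρ : Fin m → Bool,
        (if NoTwoAdjOnes (Fin.cons true (Fin.cons true ρ)) then (1:ℂ) else 0) *
        ∏ i : Fin (m+2), (if (Fin.cons true (Fin.cons true ρ) : Fin (m+2) → Bool) i = true then α (i:ℕ) else 1)) = 0 := by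
      refine Finset.sum_eq_zero (fun ρ _ => ?_)
      rw [if_neg (nta_tt ρ), zero_mul]
    have h1 : (∑ ρ : Fin m → Bool,
        (if NoTwoAdjOnes (Fin.cons true (Fin.cons false ρ)) then (1:ℂ) else 0) *
        ∏ i : Fin (m+2), (if (Fin.cons true (Fin.cons false ρ) : Fin (m+2) → Bool) i = true then α (i:ℕ) else 1))
        = α 0 * Ssum' (fun k => α (k+2)) m := by
      rw [Ssum', Finset.mul_sum]
      refine Finset.sum_congr rfl (fun ρ _ => ?_)
      simp only [nta_tf, prod_peel, prod_peel (α := fun k => α (k+1))]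
      simp
      try ring
    rw [h1, h2, add_zero]

noncomputable def contT : ℕ → (ℕ → ℂ) → ℂ
  | 0, _ => 1
  | 1, α => 1 + α 0
  | (m+2), α => contT (m+1) (fun k => α (k+1)) + α 0 * contT m (fun k => α (k+2))

lemma contT_zero (α : ℕ → ℂ) : contT 0 α = 1 := rfl
lemma contT_one (α : ℕ → ℂ) : contT 1 α = 1 + α 0 := rfl
lemma contT_rec (m : ℕ) (α : ℕ → ℂ) :
    contT (m+2) α = contT (m+1) (fun k => α (k+1)) + α 0 * contT m (fun k => α (k+2)) := rfl

lemma Ssum'_eq_contT (m : ℕ) : ∀ α : ℕ → ℂ, Ssum' α m = contT m α := by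
  induction m using Nat.twoStepInduction with
  | zero => intro α; rw [Ssum'_zero, contT_zero]
  | one => intro α; rw [Ssum'_one, contT_one]
  | more m ih1 ih2 =>
    intro α
    rw [Ssum'_rec, contT_rec, ih2, ih1]

/-- back recursion for the continuant -/
lemma contT_rec' (m : ℕ) : ∀ α : ℕ → ℂ,
    contT (m+2) α = contT (m+1) α + α (m+1) * contT m α := by
  induction m using Nat.twoStepInduction with
  | zero =>
    intro α
    show contT 2 α = contT 1 α + α 1 * contT 0 α
    rw [contT_rec 0 α, contT_one, contT_zero, contT_one, contT_zero]
    ring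
  | one =>
    intro α
    show contT 3 α = contT 2 α + α 2 * contT 1 α
    have e0 : contT 3 α = contT 2 (fun k => α (k+1)) + α 0 * contT 1 (fun k => α (k+2)) :=
      contT_rec 1 α
    have e1 : contT 2 (fun k => α (k+1))
        = contT 1 (fun k => α (k+2)) + α 1 * contT 0 (fun k => α (k+3)) :=
      contT_rec 0 (fun k => α (k+1))
    have e2 : contT 2 α = contT 1 (fun k => α (k+1)) + α 0 * contT 0 (fun k => α (k+2)) :=
      contT_rec 0 α
    have o1 : contT 1 (fun k => α (k+2)) = 1 + α 2 := contT_one _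
    have o2 : contT 1 (fun k => α (k+1)) = 1 + α 1 := contT_one _
    have z1 : contT 0 (fun k => α (k+3)) = 1 := contT_zero _
    have z2 : contT 0 (fun k => α (k+2)) = 1 := contT_zero _
    rw [e0, e1, e2, o1, o2, z1, z2, contT_one]
    ring
  | more m ih1 ih2 =>
    intro α
    show contT (m+4) α = contT (m+3) α + α (m+3) * contT (m+2) α
    have e0 : contT (m+4) α
        = contT (m+3) (fun k => α (k+1)) + α 0 * contT (m+2) (fun k => α (k+2)) :=
      contT_rec (m+2) α
    have e1 : contT (m+3) (fun k => α (k+1))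
        = contT (m+2) (fun k => α (k+1)) + α (m+3) * contT (m+1) (fun k => α (k+1)) :=
      ih2 (fun k => α (k+1))
    have e2 : contT (m+2) (fun k => α (k+2))
        = contT (m+1) (fun k => α (k+2)) + α (m+3) * contT m (fun k => α (k+2)) :=
      ih1 (fun k => α (k+2))
    have e3 : contT (m+3) α
        = contT (m+2) (fun k => α (k+1)) + α 0 * contT (m+1) (fun k => α (k+2)) :=
      contT_rec (m+1) α
    have e4 : contT (m+2) α
        = contT (m+1) (fun k => α (k+1)) + α 0 * contT m (fun k => α (k+2)) :=
      contT_rec m α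
    rw [e0, e1, e2, e3, e4]
    ring

lemma closed_form (a1 : ℂ) (z s : ℕ → ℂ) (hz0 : z 0 = 0) (hs0 : s 0 = 0) :
    ∀ m : ℕ, (∀ k, 1 ≤ k → k ≤ m+1 → s (k-1) - s k - a1 ≠ 0) →
    contT m (fun k => ((z k + s (k+1) + a1) * (z (k+1) + s (k+1))) /
      ((s k - s (k+1) - a1) * (s (k+1) - s (k+2) - a1)))
    = (-1)^(m+1) * (∏ k ∈ Finset.range (m+1), (z k + s (k+1) + a1)) /
        ∏ k ∈ Finset.range (m+1), (s k - s (k+1) - a1) := by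
  intro m
  induction m using Nat.twoStepInduction with
  | zero =>
    intro h
    have d1 : s 0 - s 1 - a1 ≠ 0 := h 1 (le_refl 1) (by omega)
    rw [contT_zero, Finset.prod_range_one, Finset.prod_range_one, hz0, hs0]
    rw [hs0] at d1
    rw [eq_comm, div_eq_one_iff_eq d1]
    ring
  | one =>
    intro h
    have d1 : s 0 - s 1 - a1 ≠ 0 := h 1 (by omega) (by omega)
    have d2 : s 1 - s 2 - a1 ≠ 0 := h 2 (by omega) (by omega)
    rw [contT_one]
    simp only [Finset.prod_range_succ, Finset.prod_range_zero, one_mul]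
    rw [hz0, hs0]
    rw [hs0] at d1
    have hD : ((0:ℂ) - s 1 - a1) * (s 1 - s 2 - a1) ≠ 0 := mul_ne_zero d1 d2
    rw [add_div' _ _ _ hD, div_eq_div_iff hD hD]
    ring
  | more m ih1 ih2 =>
    intro h
    have hrec := contT_rec' m (fun k => ((z k + s (k+1) + a1) * (z (k+1) + s (k+1))) /
      ((s k - s (k+1) - a1) * (s (k+1) - s (k+2) - a1)))
    rw [hrec]
    rw [ih2 (fun k hk hk' => h k hk (by omega)), ih1 (fun k hk hk' => h k hk (by omega))]
    have dm : s m - s (m+1) - a1 ≠ 0 := h (m+1) (by omega) (by omega)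
    have d1 : s (m+1) - s (m+1+1) - a1 ≠ 0 := h (m+2) (by omega) (by omega)
    have d1' : s (m+1) - s (m+2) - a1 ≠ 0 := h (m+2) (by omega) (by omega)
    have d2 : s (m+1+1) - s (m+1+2) - a1 ≠ 0 := h (m+3) (by omega) (by omega)
    have d2' : s (m+2) - s (m+2+1) - a1 ≠ 0 := h (m+3) (by omega) (by omega)
    have d2'' : s (m+2) - s (m+3) - a1 ≠ 0 := h (m+3) (by omega) (by omega)
    have hD : (∏ k ∈ Finset.range m, (s k - s (k+1) - a1)) ≠ 0 := by
      rw [Finset.prod_ne_zero_iff]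
      intro k hk
      simp only [Finset.mem_range] at hk
      exact h (k+1) (by omega) (by omega)
    rw [show m+2+1 = m+1+1+1 from rfl]
    simp only [Finset.prod_range_succ]
    field_simp [dm, d1, d1', d2, d2', d2'', hD]
    ring

/-- Lemma 2.1 of Stade–Trinh: with `z_0 = s_0 = s_n = 0`, `z_{n-1} = -a_1`, and
`α_k = ((z_{k-1}+s_k+a_1)(z_k+s_k)) / ((s_{k-1}-s_k-a_1)(s_k-s_{k+1}-a_1))`,
the sum over `μ ∈ U_{n-1}` of `∏_{k ∈ I_μ} α_k` vanishes.  Here the index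
`i : Fin (n-1)` corresponds to `k = i + 1 ∈ {1, …, n-1}`. -/
theorem stade_trinh_lemma_2_1 (n : ℕ) (hn : 2 ≤ n) (a1 : ℂ) (z s : ℕ → ℂ)
    (hz0 : z 0 = 0) (hs0 : s 0 = 0) (hsn : s n = 0) (hzn : z (n - 1) = -a1)
    (hne : ∀ k, 1 ≤ k → k ≤ n → s (k - 1) - s k - a1 ≠ 0) :
    ∑ μ ∈ Finset.univ.filter (fun μ : Fin (n - 1) → Bool => NoTwoAdjOnes μ),
      ∏ i ∈ Finset.univ.filter (fun i : Fin (n - 1) => μ i = true),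
        ((z (i : ℕ) + s ((i : ℕ) + 1) + a1) * (z ((i : ℕ) + 1) + s ((i : ℕ) + 1))) /
          ((s (i : ℕ) - s ((i : ℕ) + 1) - a1) *
            (s ((i : ℕ) + 1) - s ((i : ℕ) + 2) - a1)) = 0 := by
  have key : (∑ μ ∈ Finset.univ.filter (fun μ : Fin (n - 1) → Bool => NoTwoAdjOnes μ),
      ∏ i ∈ Finset.univ.filter (fun i : Fin (n - 1) => μ i = true),
        ((z (i : ℕ) + s ((i : ℕ) + 1) + a1) * (z ((i : ℕ) + 1) + s ((i : ℕ) + 1))) /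
          ((s (i : ℕ) - s ((i : ℕ) + 1) - a1) *
            (s ((i : ℕ) + 1) - s ((i : ℕ) + 2) - a1)))
      = Ssum' (fun k => ((z k + s (k+1) + a1) * (z (k+1) + s (k+1))) /
          ((s k - s (k+1) - a1) * (s (k+1) - s (k+2) - a1))) (n-1) := by
    rw [Ssum', Finset.sum_filter]
    refine Finset.sum_congr rfl (fun μ _ => ?_)
    by_cases hμ : NoTwoAdjOnes μ
    · rw [if_pos hμ, if_pos hμ, one_mul, Finset.prod_filter]
    · rw [if_neg hμ, if_neg hμ, zero_mul]
  rw [key, Ssum'_eq_contT,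
    closed_form a1 z s hz0 hs0 (n-1) (fun k hk hk' => hne k hk (by omega))]
  have hmem : n - 1 ∈ Finset.range ((n-1)+1) := Finset.self_mem_range_succ _
  have hzero : (∏ k ∈ Finset.range ((n-1)+1), (z k + s (k+1) + a1)) = 0 :=
    Finset.prod_eq_zero hmem (by rw [hzn, show n-1+1 = n by omega, hsn]; ring)
  rw [hzero, mul_zero, zero_div]
end

section
/- Let n ≥ 2 be an integer and let s_1,…,s_{n−1}, z_1,…,z_{n−2}, a_1 be complex numbers. Set s_0 = s_n = 0 and, for 1 ≤ k ≤ n−1, define m_k = 1/((s_{k−1}−s_k−a_1)(s_k−s_{k+1}−a_1)). For μ = (μ_1,…,μ_{n−1}) ∈ U_{n−1} define G(μ) = Γ(s_1+μ_1+a_1)·Γ(s_{n−1}+μ_{n−1}−a_1)·Π_{j=1}^{n−2} Γ(z_j+s_j+μ_j)·Γ(z_j+s_{j+1}+μ_{j+1}+a_1). Assume s_{k−1}−s_k−a_1 ≠ 0 for all 1 ≤ k ≤ n, and that none of the complex numbers s_1+a_1, s_{n−1}−a_1, z_j+s_j, z_j+s_{j+1}+a_1 (for 1 ≤ j ≤ n−2)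 is a nonpositive integer. Then Σ_{μ ∈ U_{n−1}} (Π_{k ∈ I_μ} m_k)·G(μ) = 0. (This is the pointwise, integrand form of the recurrence relation Σ_{μ∈U_{n−1}} (Π_{k∈I_μ} m_k)·T_{n,a}(s+μ) = 0 for the Mellin transform of the GL(n,ℝ) Whittaker function.) -/
open Finset

/-- The `k`-th entry (1-indexed, `1 ≤ k ≤ m`) of a Boolean tuple `μ : Fin m → Bool`,
viewed as the complex number `0` or `1`. -/
noncomputable def muC {m : ℕ} (μ : Fin m → Bool) (k : ℕ) : ℂ :=
  if h : k - 1 < m then (if μ ⟨k - 1, h⟩ then 1 else 0) else 0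

/-!
Write `d i = s i - s (i + 1) - a₁`. By `Γ(x + 1) = x Γ(x)`, the summand at `μ` is `G(0)` times
`∏_{i ∈ I_μ} c i` with `c i = α i β i / (d i d (i + 1))`, where `α i` and `β i` are the
arguments at `μ = 0` of the two Gamma factors containing `μ_{i+1}`. Putting `r 0 = 0` and
`r (i + 1) = β i / d (i + 1)`, one has `c i = -(1 - r i) r (i + 1)`, and then the sum of
`∏_{i ∈ I_μ} c i` over `μ ∈ U_m` equals `∏_{i < m} (1 - r (i + 1))`: both sides satisfy
`T (m + 2) = T (m + 1) + c (m + 1) T m`. Since `s n = 0`,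
`β (n - 2) = s (n - 1) - a₁ = d (n - 1)`, so the last factor vanishes.
-/

theorem noTwoAdjOnes_snoc {l : ℕ} (f : Fin l → Bool) (b : Bool) :
    NoTwoAdjOnes (Fin.snoc f b : Fin (l + 1) → Bool) ↔
      NoTwoAdjOnes f ∧ ∀ i : Fin l, (i : ℕ) + 1 = l → ¬(f i = true ∧ b = true) := by
  simp only [NoTwoAdjOnes, Fin.forall_fin_succ', Fin.snoc_castSucc, Fin.snoc_last,
    Fin.val_castSucc, Fin.val_last]
  grind

theorem Fin.sum_bool_tuple_snoc {M : Type*} [AddCommMonoid M] {l : ℕ}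
    (F : (Fin (l + 1) → Bool) → M) :
    ∑ μ, F μ = ∑ f : Fin l → Bool, (F (Fin.snoc f false) + F (Fin.snoc f true)) := by
  rw [← (Fin.snocEquiv fun _ => Bool).sum_comp, Fintype.sum_prod_type_right]
  simp [Fin.snocEquiv, add_comm]

section PathIndepSum

variable {R : Type*} [CommSemiring R]

noncomputable def indepWeight (c : ℕ → R) {m : ℕ} (μ : Fin m → Bool) : R :=
  if NoTwoAdjOnes μ then ∏ i, if μ i then c i else 1 else 0

noncomputable def pathIndepSum (c : ℕ → R) (m : ℕ) : R :=
  ∑ μ ∈ univ.filter (fun μ : Fin m → Bool => NoTwoAdjOnes μ),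
    ∏ i ∈ univ.filter (fun i => μ i = true), c i

theorem pathIndepSum_eq_sum_indepWeight (c : ℕ → R) (m : ℕ) :
    pathIndepSum c m = ∑ μ : Fin m → Bool, indepWeight c μ := by
  simp only [pathIndepSum, indepWeight, sum_filter, prod_filter]

theorem prod_snoc_ite (c : ℕ → R) {l : ℕ} (f : Fin l → Bool) (b : Bool) :
    ∏ i : Fin (l + 1), (if (Fin.snoc f b : Fin (l + 1) → Bool) i then c i else 1) =
      (∏ i : Fin l, if f i then c i else 1) * if b then c l else 1 := by
  simp [Fin.prod_univ_castSucc]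

theorem indepWeight_snoc_false (c : ℕ → R) {l : ℕ} (f : Fin l → Bool) :
    indepWeight c (Fin.snoc f false : Fin (l + 1) → Bool) = indepWeight c f := by
  simp [indepWeight, noTwoAdjOnes_snoc, prod_snoc_ite]

theorem indepWeight_snoc_true (c : ℕ → R) {l : ℕ} (f : Fin (l + 1) → Bool) :
    indepWeight c (Fin.snoc f true : Fin (l + 2) → Bool) =
      if f (Fin.last l) then 0 else indepWeight c f * c (l + 1) := by
  have hlast : ∀ i : Fin (l + 1), (i : ℕ) = l ↔ i = Fin.last l := by
    simp [Fin.ext_iff]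
  by_cases h : f (Fin.last l) <;> simp [indepWeight, noTwoAdjOnes_snoc, prod_snoc_ite, hlast, h]

theorem pathIndepSum_zero (c : ℕ → R) : pathIndepSum c 0 = 1 := by
  simp [pathIndepSum_eq_sum_indepWeight, indepWeight, NoTwoAdjOnes]

theorem pathIndepSum_one (c : ℕ → R) : pathIndepSum c 1 = 1 + c 0 := by
  simp [pathIndepSum_eq_sum_indepWeight, Fin.sum_bool_tuple_snoc, indepWeight, NoTwoAdjOnes,
    Fin.snoc]

theorem pathIndepSum_add_two (c : ℕ → R) (m : ℕ) :
    pathIndepSum c (m + 2) = pathIndepSum c (m + 1) + pathIndepSum c m * c (m + 1) := by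
  simp only [pathIndepSum_eq_sum_indepWeight]
  rw [Fin.sum_bool_tuple_snoc, sum_add_distrib]
  simp only [indepWeight_snoc_false, indepWeight_snoc_true]
  congr 1
  rw [Fin.sum_bool_tuple_snoc, sum_mul]
  simp [indepWeight_snoc_false]

theorem pathIndepSum_congr {c c' : ℕ → R} {m : ℕ} (h : ∀ i < m, c i = c' i) :
    pathIndepSum c m = pathIndepSum c' m := by
  simp [pathIndepSum_eq_sum_indepWeight, indepWeight, h]

end PathIndepSum

theorem pathIndepSum_eq_prod {R : Type*} [CommRing R] (r : ℕ → R) (hr : r 0 = 0) (m : ℕ) :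
    pathIndepSum (fun i => -(1 - r i) * r (i + 1)) m = ∏ i ∈ range m, (1 - r (i + 1)) := by
  induction m using Nat.twoStepInduction with
  | zero => simp [pathIndepSum_zero]
  | one => simp [pathIndepSum_one, hr, sub_eq_add_neg]
  | more m ih₀ ih₁ =>
    rw [pathIndepSum_add_two, ih₀, ih₁, prod_range_succ, prod_range_succ, prod_range_succ]
    ring

theorem pathIndepSum_eq_zero {K : Type*} [Field K] (α β d : ℕ → K) (m : ℕ)
    (hd : ∀ i ≤ m + 1, d i ≠ 0) (hα₀ : α 0 = -d 0)
    (hα : ∀ i < m, α (i + 1) = β i - d (i + 1)) (hβ : β m = d (m + 1)) :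
    pathIndepSum (fun i => α i * β i / (d i * d (i + 1))) (m + 1) = 0 := by
  set r : ℕ → K := fun i => if i = 0 then 0 else β (i - 1) / d i
  have hc : ∀ i < m + 1, α i * β i / (d i * d (i + 1)) = -(1 - r i) * r (i + 1) := by
    intro i hi
    have hdi := hd i (by omega)
    have hdi' := hd (i + 1) (by omega)
    rcases i with _ | i
    · simp only [r, hα₀, ↓reduceIte, one_ne_zero, zero_add, tsub_self, sub_zero]
      field_simp
    · simp only [r, hα i (by omega), Nat.add_one_ne_zero, ↓reduceIte, add_tsub_cancel_right,
        neg_sub]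
      field_simp
  rw [pathIndepSum_congr hc, pathIndepSum_eq_prod r rfl]
  refine prod_eq_zero (mem_range.2 (Nat.lt_succ_self m)) ?_
  simp [r, hβ, hd (m + 1) le_rfl]

theorem muC_succ {m : ℕ} (μ : Fin m → Bool) (i : Fin m) :
    muC μ (i + 1) = if μ i then 1 else 0 := by
  simp [muC]

theorem Complex.Gamma_add_ite {x : ℂ} (hx : x ≠ 0) (b : Bool) :
    Complex.Gamma (x + if b then 1 else 0) = (if b then x else 1) * Complex.Gamma x := by
  cases b <;> simp [Complex.Gamma_add_one x hx]

theorem prod_filter_one_div_mul_prod_Gamma_add_muC {m : ℕ} (μ : Fin m → Bool)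
    (α β d : ℕ → ℂ) (hα : ∀ i : Fin m, α i ≠ 0) (hβ : ∀ i : Fin m, β i ≠ 0) :
    (∏ i ∈ univ.filter (fun i => μ i = true), (1 / (d i * d (i + 1)))) *
        ∏ i : Fin m,
          (Complex.Gamma (α i + muC μ (i + 1)) * Complex.Gamma (β i + muC μ (i + 1))) =
      (∏ i ∈ univ.filter (fun i => μ i = true), (α i * β i / (d i * d (i + 1)))) *
        ∏ i : Fin m, (Complex.Gamma (α i) * Complex.Gamma (β i)) := by
  simp only [prod_filter, muC_succ, Complex.Gamma_add_ite (hα _), Complex.Gamma_add_ite (hβ _),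
    ← prod_mul_distrib]
  refine Fintype.prod_congr _ _ fun i => ?_
  split_ifs <;> ring

theorem prod_Icc_one_eq_prod_fin {M : Type*} [CommMonoid M] (f : ℕ → M) (m : ℕ) :
    ∏ j ∈ Icc 1 m, f j = ∏ i : Fin m, f (i + 1) := by
  rw [← Ico_add_one_right_eq_Icc, prod_Ico_eq_prod_range, add_tsub_cancel_right,
    ← Fin.prod_univ_eq_prod_range]
  simp [add_comm]

theorem prod_Gamma_muC_eq_prod_fin (m : ℕ) (a1 : ℂ) (z s : ℕ → ℂ)
    (μ : Fin (m + 1) → Bool) :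
    Complex.Gamma (s 1 + muC μ 1 + a1) * Complex.Gamma (s (m + 1) + muC μ (m + 1) - a1) *
        ∏ j ∈ Icc 1 m,
          (Complex.Gamma (z j + s j + muC μ j) *
            Complex.Gamma (z j + s (j + 1) + muC μ (j + 1) + a1)) =
      ∏ i : Fin (m + 1),
        (Complex.Gamma
            ((if (i : ℕ) = 0 then s 1 + a1 else z i + s (i + 1) + a1) + muC μ (i + 1)) *
          Complex.Gamma ((if (i : ℕ) = m then s (m + 1) - a1 else z (i + 1) + s (i + 1)) +
            muC μ (i + 1))) := by
  rw [prod_Icc_one_eq_prod_fin, prod_mul_distrib, prod_mul_distrib, Fin.prod_univ_succ,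
    Fin.prod_univ_castSucc]
  simp only [Fin.val_zero, Fin.val_succ, Fin.val_castSucc, Fin.val_last, (Fin.isLt _).ne,
    Nat.add_one_ne_zero, ↓reduceIte, zero_add]
  ring_nf

/-- Pointwise (integrand) form of the recurrence relation of Theorem 2.2 of
Stade–Trinh: with `s_0 = s_n = 0`,
`m_k = 1/((s_{k-1}-s_k-a_1)(s_k-s_{k+1}-a_1))`, and
`G(μ) = Γ(s_1+μ_1+a_1)Γ(s_{n-1}+μ_{n-1}-a_1) ∏_{j=1}^{n-2} Γ(z_j+s_j+μ_j)Γ(z_j+s_{j+1}+μ_{j+1}+a_1)`,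
we have `∑_{μ ∈ U_{n-1}} (∏_{k ∈ I_μ} m_k) G(μ) = 0`.  Here the index
`i : Fin (n-1)` corresponds to `k = i + 1 ∈ {1, …, n-1}`. -/
theorem pointwise_recurrence (n : ℕ) (hn : 2 ≤ n) (a1 : ℂ) (z s : ℕ → ℂ)
    (hs0 : s 0 = 0) (hsn : s n = 0)
    (hne : ∀ k, 1 ≤ k → k ≤ n → s (k - 1) - s k - a1 ≠ 0)
    (h1 : ∀ N : ℕ, s 1 + a1 ≠ -(N : ℂ))
    (h2 : ∀ N : ℕ, s (n - 1) - a1 ≠ -(N : ℂ))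
    (h3 : ∀ j, 1 ≤ j → j ≤ n - 2 → ∀ N : ℕ, z j + s j ≠ -(N : ℂ))
    (h4 : ∀ j, 1 ≤ j → j ≤ n - 2 → ∀ N : ℕ, z j + s (j + 1) + a1 ≠ -(N : ℂ)) :
    ∑ μ ∈ Finset.univ.filter (fun μ : Fin (n - 1) → Bool => NoTwoAdjOnes μ),
      (∏ i ∈ Finset.univ.filter (fun i : Fin (n - 1) => μ i = true),
          (1 / ((s (i : ℕ) - s ((i : ℕ) + 1) - a1) *
            (s ((i : ℕ) + 1) - s ((i : ℕ) + 2) - a1)))) *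
        (Complex.Gamma (s 1 + muC μ 1 + a1) *
          Complex.Gamma (s (n - 1) + muC μ (n - 1) - a1) *
          ∏ j ∈ Finset.Icc 1 (n - 2),
            (Complex.Gamma (z j + s j + muC μ j) *
              Complex.Gamma (z j + s (j + 1) + muC μ (j + 1) + a1))) = 0 := by
  obtain ⟨m, rfl⟩ : ∃ m, n = m + 2 := ⟨n - 2, by omega⟩
  simp only [show m + 2 - 1 = m + 1 from rfl, show m + 2 - 2 = m from rfl] at *
  set α : ℕ → ℂ := fun i => if i = 0 then s 1 + a1 else z i + s (i + 1) + a1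
  set β : ℕ → ℂ := fun i => if i = m then s (m + 1) - a1 else z (i + 1) + s (i + 1)
  set d : ℕ → ℂ := fun i => s i - s (i + 1) - a1
  have hα : ∀ i : Fin (m + 1), α i ≠ 0 := by
    intro i
    by_cases hi : (i : ℕ) = 0
    · simpa [α, hi] using h1 0
    · simpa [α, hi] using h4 i (by omega) (by omega) 0
  have hβ : ∀ i : Fin (m + 1), β i ≠ 0 := by
    intro i
    by_cases hi : (i : ℕ) = m
    · simpa [β, hi] using h2 0
    · simpa [β, hi] using h3 (i + 1) (by omega) (by omega) 0
  calc _ = ∑ μ ∈ univ.filter (fun μ : Fin (m + 1) → Bool => NoTwoAdjOnes μ),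
        (∏ i ∈ univ.filter (fun i => μ i = true), (α i * β i / (d i * d (i + 1)))) *
          ∏ i : Fin (m + 1), (Complex.Gamma (α i) * Complex.Gamma (β i)) :=
        sum_congr rfl fun μ _ => by
          rw [prod_Gamma_muC_eq_prod_fin]
          exact prod_filter_one_div_mul_prod_Gamma_add_muC μ α β d hα hβ
    _ = 0 := by
      rw [← sum_mul]
      change pathIndepSum (fun i => α i * β i / (d i * d (i + 1))) (m + 1) * _ = 0
      rw [pathIndepSum_eq_zero α β d m, zero_mul]
      · intro i hi
        simpa [d] using hne (i + 1) (by omega) (by omega)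
      · simp only [α, d, hs0, if_pos]
        ring
      · intro i hi
        simp only [α, β, d, hi.ne, if_neg, Nat.add_one_ne_zero, not_false_eq_true]
        ring
      · simp [β, d, hsn]
end

section
/- Assume (i) and (ii) below hold for F. Let a = (a_1,a_2,a_3,a_4) have a_1+a_2+a_3+a_4 = 0 with a_1,a_2,a_3,a_4 pairwise distinct, and let (s_1,s_2,s_3) ∈ ℂ³ satisfy s_1 ≠ −a_k and s_3 ≠ a_k for all 1 ≤ k ≤ 4. Then C_a(−s_3, s_2)·F(a; s_1,s_2,s_3) − (s_1+s_2−s_3)·F(a; s_1,s_2+1,s_3) − 2s_2·F(a; s_1,s_2,s_3+1) = 0. -/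
open Finset

/-- `B(p,q,r) = (p+q-r)(p+r)`. -/
noncomputable def Brec (p q r : ℂ) : ℂ := (p + q - r) * (p + r)

/-- `C_a(p,q) = q(p²+(p+q)²) − (1/2)q(a_1²+a_2²+a_3²+a_4²) − (1/3)(a_1³+a_2³+a_3³+a_4³)`. -/
noncomputable def Crec (a : Fin 4 → ℂ) (p q : ℂ) : ℂ :=
  q * (p ^ 2 + (p + q) ^ 2) - (1 / 2) * q * (a 0 ^ 2 + a 1 ^ 2 + a 2 ^ 2 + a 3 ^ 2)
    - (1 / 3) * (a 0 ^ 3 + a 1 ^ 3 + a 2 ^ 3 + a 3 ^ 3)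

/-- Hypothesis (i): invariance of `F` under permutations of the `a_k`'s. -/
def PermInvariant (F : (Fin 4 → ℂ) → ℂ → ℂ → ℂ → ℂ) : Prop :=
  ∀ σ : Equiv.Perm (Fin 4), ∀ a : Fin 4 → ℂ, a 0 + a 1 + a 2 + a 3 = 0 →
    ∀ s1 s2 s3 : ℂ, F (a ∘ σ) s1 s2 s3 = F a s1 s2 s3

/-- Hypothesis (ii): the denominator-cleared GL(4) recurrence. -/
def GL4Recurrence (F : (Fin 4 → ℂ) → ℂ → ℂ → ℂ → ℂ) : Prop :=
  ∀ a : Fin 4 → ℂ, a 0 + a 1 + a 2 + a 3 = 0 → ∀ s1 s2 s3 : ℂ,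
    (-s1 - a 0) * (s1 - s2 - a 0) * (s2 - s3 - a 0) * (s3 - a 0) * F a s1 s2 s3
      + (s2 - s3 - a 0) * (s3 - a 0) * F a (s1 + 1) s2 s3
      + (-s1 - a 0) * (s3 - a 0) * F a s1 (s2 + 1) s3
      + (-s1 - a 0) * (s1 - s2 - a 0) * F a s1 s2 (s3 + 1)
      + F a (s1 + 1) s2 (s3 + 1) = 0

/-- Hypothesis (iii): the reflection invariance `F(a; s1,s2,s3) = F(−a; s3,s2,s1)`. -/
def ReflInvariant (F : (Fin 4 → ℂ) → ℂ → ℂ → ℂ → ℂ) : Prop :=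
  ∀ a : Fin 4 → ℂ, a 0 + a 1 + a 2 + a 3 = 0 →
    ∀ s1 s2 s3 : ℂ, F a s1 s2 s3 = F (fun i => -a i) s3 s2 s1

set_option maxHeartbeats 4000000 in
/-- Auxiliary scalar identity: a suitable linear combination of the four permuted
recurrences yields the target relation, multiplied by the Vandermonde determinant. -/
theorem stmt3_aux (a0 a1 a2 a3 s1 s2 s3 f000 f100 f010 f001 f101 : ℂ)
    (hsum : a0 + a1 + a2 + a3 = 0)
    (key0 : (-s1 - a0) * (s1 - s2 - a0) * (s2 - s3 - a0) * (s3 - a0) * f000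
      + (s2 - s3 - a0) * (s3 - a0) * f100 + (-s1 - a0) * (s3 - a0) * f010
      + (-s1 - a0) * (s1 - s2 - a0) * f001 + f101 = 0)
    (key1 : (-s1 - a1) * (s1 - s2 - a1) * (s2 - s3 - a1) * (s3 - a1) * f000
      + (s2 - s3 - a1) * (s3 - a1) * f100 + (-s1 - a1) * (s3 - a1) * f010
      + (-s1 - a1) * (s1 - s2 - a1) * f001 + f101 = 0)
    (key2 : (-s1 - a2) * (s1 - s2 - a2) * (s2 - s3 - a2) * (s3 - a2) * f000
      + (s2 - s3 - a2) * (s3 - a2) * f100 + (-s1 - a2) * (s3 - a2) * f010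
      + (-s1 - a2) * (s1 - s2 - a2) * f001 + f101 = 0)
    (key3 : (-s1 - a3) * (s1 - s2 - a3) * (s2 - s3 - a3) * (s3 - a3) * f000
      + (s2 - s3 - a3) * (s3 - a3) * f100 + (-s1 - a3) * (s3 - a3) * f010
      + (-s1 - a3) * (s1 - s2 - a3) * f001 + f101 = 0)
    :
    (a0 - a1) * (a0 - a2) * (a0 - a3) * (a1 - a2) * (a1 - a3) * (a2 - a3)
      * ((s2 * ((-s3) ^ 2 + (-s3 + s2) ^ 2) - (1 / 2) * s2 * (a0 ^ 2 + a1 ^ 2 + a2 ^ 2 + a3 ^ 2)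
        - (1 / 3) * (a0 ^ 3 + a1 ^ 3 + a2 ^ 3 + a3 ^ 3)) * f000
        - (s1 + s2 - s3) * f010 - 2 * s2 * f001) = 0 := by
  linear_combination
    (a1*a2^2*a3^3*f001 + a1*a2^2*a3^3*f010 + a1*a2^2*a3^3*f100 + (-1 : ℂ)*a1*a2^2*a3^3*s3^2*f000 + a1*a2^2*a3^3*s2*s3*f000 + (-1 : ℂ)*a1*a2^2*a3^3*s2^2*f000 + a1*a2^2*a3^3*s1*s2*f000 + (-1 : ℂ)*a1*a2^2*a3^3*s1^2*f000 + (1/2 : ℂ)*a1*a2^2*a3^4*s2*f000 + (2/3 : ℂ)*a1*a2^2*a3^5*f000 + (-1 : ℂ)*a1*a2^3*a3^2*f001 + (-1 : ℂ)*a1*a2^3*a3^2*f010 + (-1 : ℂ)*a1*a2^3*a3^2*f100 + a1*a2^3*a3^2*s3^2*f000 + (-1 : ℂ)*a1*a2^3*a3^2*s2*s3*f000 + a1*a2^3*a3^2*s2^2*f000 + (-1 : ℂ)*a1*a2^3*a3^2*s1*s2*f000 + a1*a2^3*a3^2*s1^2*f000 + (-1/3 : ℂ)*a1*a2^3*a3^4*f000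 + (-1/2 : ℂ)*a1*a2^4*a3^2*s2*f000 + (1/3 : ℂ)*a1*a2^4*a3^3*f000 + (-2/3 : ℂ)*a1*a2^5*a3^2*f000 + (-1 : ℂ)*a1^2*a2*a3^3*f001 + (-1 : ℂ)*a1^2*a2*a3^3*f010 + (-1 : ℂ)*a1^2*a2*a3^3*f100 + a1^2*a2*a3^3*s3^2*f000 + (-1 : ℂ)*a1^2*a2*a3^3*s2*s3*f000 + a1^2*a2*a3^3*s2^2*f000 + (-1 : ℂ)*a1^2*a2*a3^3*s1*s2*f000 + a1^2*a2*a3^3*s1^2*f000 + (-1/2 : ℂ)*a1^2*a2*a3^4*s2*f000 + (-2/3 : ℂ)*a1^2*a2*a3^5*f000 + a1^2*a2^3*a3*f001 + a1^2*a2^3*a3*f010 + a1^2*a2^3*a3*f100 + (-1 : ℂ)*a1^2*a2^3*a3*s3^2*f000 + a1^2*a2^3*a3*s2*s3*f000 + (-1 : ℂ)*a1^2*a2^3*a3*s2^2*f000 + a1^2*a2^3*a3*s1*s2*f000 + (-1 : ℂ)*a1^2*a2^3*a3*s1^2*f000 + (1/2 : ℂ)*a1^2*a2^4*a3*s2*f000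 + (2/3 : ℂ)*a1^2*a2^5*a3*f000 + a1^3*a2*a3^2*f001 + a1^3*a2*a3^2*f010 + a1^3*a2*a3^2*f100 + (-1 : ℂ)*a1^3*a2*a3^2*s3^2*f000 + a1^3*a2*a3^2*s2*s3*f000 + (-1 : ℂ)*a1^3*a2*a3^2*s2^2*f000 + a1^3*a2*a3^2*s1*s2*f000 + (-1 : ℂ)*a1^3*a2*a3^2*s1^2*f000 + (1/3 : ℂ)*a1^3*a2*a3^4*f000 + (-1 : ℂ)*a1^3*a2^2*a3*f001 + (-1 : ℂ)*a1^3*a2^2*a3*f010 + (-1 : ℂ)*a1^3*a2^2*a3*f100 + a1^3*a2^2*a3*s3^2*f000 + (-1 : ℂ)*a1^3*a2^2*a3*s2*s3*f000 + a1^3*a2^2*a3*s2^2*f000 + (-1 : ℂ)*a1^3*a2^2*a3*s1*s2*f000 + a1^3*a2^2*a3*s1^2*f000 + (-1/3 : ℂ)*a1^3*a2^4*a3*f000 + (1/2 : ℂ)*a1^4*a2*a3^2*s2*f000 + (-1/3 : ℂ)*a1^4*a2*a3^3*f000 + (-1/2 : ℂ)*a1^4*a2^2*a3*s2*f000 + (1/3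 : ℂ)*a1^4*a2^3*a3*f000 + (2/3 : ℂ)*a1^5*a2*a3^2*f000 + (-2/3 : ℂ)*a1^5*a2^2*a3*f000 + (-1 : ℂ)*a0*a2^2*a3^3*f001 + (-1 : ℂ)*a0*a2^2*a3^3*f010 + (-1 : ℂ)*a0*a2^2*a3^3*f100 + a0*a2^2*a3^3*s3^2*f000 + (-1 : ℂ)*a0*a2^2*a3^3*s2*s3*f000 + a0*a2^2*a3^3*s2^2*f000 + (-1 : ℂ)*a0*a2^2*a3^3*s1*s2*f000 + a0*a2^2*a3^3*s1^2*f000 + (-1/2 : ℂ)*a0*a2^2*a3^4*s2*f000 + (-2/3 : ℂ)*a0*a2^2*a3^5*f000 + a0*a2^3*a3^2*f001 + a0*a2^3*a3^2*f010 + a0*a2^3*a3^2*f100 + (-1 : ℂ)*a0*a2^3*a3^2*s3^2*f000 + a0*a2^3*a3^2*s2*s3*f000 + (-1 : ℂ)*a0*a2^3*a3^2*s2^2*f000 + a0*a2^3*a3^2*s1*s2*f000 + (-1 : ℂ)*a0*a2^3*a3^2*s1^2*f000 + (1/3 : ℂ)*a0*a2^3*a3^4*f000 + (1/2 : ℂ)*a0*a2^4*a3^2*s2*f000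 + (-1/3 : ℂ)*a0*a2^4*a3^3*f000 + (2/3 : ℂ)*a0*a2^5*a3^2*f000 + a0*a1^2*a3^3*f001 + a0*a1^2*a3^3*f010 + a0*a1^2*a3^3*f100 + (-1 : ℂ)*a0*a1^2*a3^3*s3^2*f000 + a0*a1^2*a3^3*s2*s3*f000 + (-1 : ℂ)*a0*a1^2*a3^3*s2^2*f000 + a0*a1^2*a3^3*s1*s2*f000 + (-1 : ℂ)*a0*a1^2*a3^3*s1^2*f000 + (1/2 : ℂ)*a0*a1^2*a3^4*s2*f000 + (2/3 : ℂ)*a0*a1^2*a3^5*f000 + (-1 : ℂ)*a0*a1^2*a2^3*f001 + (-1 : ℂ)*a0*a1^2*a2^3*f010 + (-1 : ℂ)*a0*a1^2*a2^3*f100 + a0*a1^2*a2^3*s3^2*f000 + (-1 : ℂ)*a0*a1^2*a2^3*s2*s3*f000 + a0*a1^2*a2^3*s2^2*f000 + (-1 : ℂ)*a0*a1^2*a2^3*s1*s2*f000 + a0*a1^2*a2^3*s1^2*f000 + (-1/2 : ℂ)*a0*a1^2*a2^4*s2*f000 + (-2/3 : ℂ)*a0*a1^2*a2^5*f000 + (-1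 : ℂ)*a0*a1^3*a3^2*f001 + (-1 : ℂ)*a0*a1^3*a3^2*f010 + (-1 : ℂ)*a0*a1^3*a3^2*f100 + a0*a1^3*a3^2*s3^2*f000 + (-1 : ℂ)*a0*a1^3*a3^2*s2*s3*f000 + a0*a1^3*a3^2*s2^2*f000 + (-1 : ℂ)*a0*a1^3*a3^2*s1*s2*f000 + a0*a1^3*a3^2*s1^2*f000 + (-1/3 : ℂ)*a0*a1^3*a3^4*f000 + a0*a1^3*a2^2*f001 + a0*a1^3*a2^2*f010 + a0*a1^3*a2^2*f100 + (-1 : ℂ)*a0*a1^3*a2^2*s3^2*f000 + a0*a1^3*a2^2*s2*s3*f000 + (-1 : ℂ)*a0*a1^3*a2^2*s2^2*f000 + a0*a1^3*a2^2*s1*s2*f000 + (-1 : ℂ)*a0*a1^3*a2^2*s1^2*f000 + (1/3 : ℂ)*a0*a1^3*a2^4*f000 + (-1/2 : ℂ)*a0*a1^4*a3^2*s2*f000 + (1/3 : ℂ)*a0*a1^4*a3^3*f000 + (1/2 : ℂ)*a0*a1^4*a2^2*s2*f000 + (-1/3 : ℂ)*a0*a1^4*a2^3*f000 + (-2/3 :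 ℂ)*a0*a1^5*a3^2*f000 + (2/3 : ℂ)*a0*a1^5*a2^2*f000 + a0^2*a2*a3^3*f001 + a0^2*a2*a3^3*f010 + a0^2*a2*a3^3*f100 + (-1 : ℂ)*a0^2*a2*a3^3*s3^2*f000 + a0^2*a2*a3^3*s2*s3*f000 + (-1 : ℂ)*a0^2*a2*a3^3*s2^2*f000 + a0^2*a2*a3^3*s1*s2*f000 + (-1 : ℂ)*a0^2*a2*a3^3*s1^2*f000 + (1/2 : ℂ)*a0^2*a2*a3^4*s2*f000 + (2/3 : ℂ)*a0^2*a2*a3^5*f000 + (-1 : ℂ)*a0^2*a2^3*a3*f001 + (-1 : ℂ)*a0^2*a2^3*a3*f010 + (-1 : ℂ)*a0^2*a2^3*a3*f100 + a0^2*a2^3*a3*s3^2*f000 + (-1 : ℂ)*a0^2*a2^3*a3*s2*s3*f000 + a0^2*a2^3*a3*s2^2*f000 + (-1 : ℂ)*a0^2*a2^3*a3*s1*s2*f000 + a0^2*a2^3*a3*s1^2*f000 + (-1/2 : ℂ)*a0^2*a2^4*a3*s2*f000 + (-2/3 : ℂ)*a0^2*a2^5*a3*f000 + (-1 : ℂ)*a0^2*a1*a3^3*f001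 + (-1 : ℂ)*a0^2*a1*a3^3*f010 + (-1 : ℂ)*a0^2*a1*a3^3*f100 + a0^2*a1*a3^3*s3^2*f000 + (-1 : ℂ)*a0^2*a1*a3^3*s2*s3*f000 + a0^2*a1*a3^3*s2^2*f000 + (-1 : ℂ)*a0^2*a1*a3^3*s1*s2*f000 + a0^2*a1*a3^3*s1^2*f000 + (-1/2 : ℂ)*a0^2*a1*a3^4*s2*f000 + (-2/3 : ℂ)*a0^2*a1*a3^5*f000 + a0^2*a1*a2^3*f001 + a0^2*a1*a2^3*f010 + a0^2*a1*a2^3*f100 + (-1 : ℂ)*a0^2*a1*a2^3*s3^2*f000 + a0^2*a1*a2^3*s2*s3*f000 + (-1 : ℂ)*a0^2*a1*a2^3*s2^2*f000 + a0^2*a1*a2^3*s1*s2*f000 + (-1 : ℂ)*a0^2*a1*a2^3*s1^2*f000 + (1/2 : ℂ)*a0^2*a1*a2^4*s2*f000 + (2/3 : ℂ)*a0^2*a1*a2^5*f000 + a0^2*a1^3*a3*f001 + a0^2*a1^3*a3*f010 + a0^2*a1^3*a3*f100 + (-1 : ℂ)*a0^2*a1^3*a3*s3^2*f000 + a0^2*a1^3*a3*s2*s3*f000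 + (-1 : ℂ)*a0^2*a1^3*a3*s2^2*f000 + a0^2*a1^3*a3*s1*s2*f000 + (-1 : ℂ)*a0^2*a1^3*a3*s1^2*f000 + (-1 : ℂ)*a0^2*a1^3*a2*f001 + (-1 : ℂ)*a0^2*a1^3*a2*f010 + (-1 : ℂ)*a0^2*a1^3*a2*f100 + a0^2*a1^3*a2*s3^2*f000 + (-1 : ℂ)*a0^2*a1^3*a2*s2*s3*f000 + a0^2*a1^3*a2*s2^2*f000 + (-1 : ℂ)*a0^2*a1^3*a2*s1*s2*f000 + a0^2*a1^3*a2*s1^2*f000 + (1/2 : ℂ)*a0^2*a1^4*a3*s2*f000 + (-1/2 : ℂ)*a0^2*a1^4*a2*s2*f000 + (2/3 : ℂ)*a0^2*a1^5*a3*f000 + (-2/3 : ℂ)*a0^2*a1^5*a2*f000 + (-1 : ℂ)*a0^3*a2*a3^2*f001 + (-1 : ℂ)*a0^3*a2*a3^2*f010 + (-1 : ℂ)*a0^3*a2*a3^2*f100 + a0^3*a2*a3^2*s3^2*f000 + (-1 : ℂ)*a0^3*a2*a3^2*s2*s3*f000 + a0^3*a2*a3^2*s2^2*f000 + (-1 :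 ℂ)*a0^3*a2*a3^2*s1*s2*f000 + a0^3*a2*a3^2*s1^2*f000 + (-1/3 : ℂ)*a0^3*a2*a3^4*f000 + a0^3*a2^2*a3*f001 + a0^3*a2^2*a3*f010 + a0^3*a2^2*a3*f100 + (-1 : ℂ)*a0^3*a2^2*a3*s3^2*f000 + a0^3*a2^2*a3*s2*s3*f000 + (-1 : ℂ)*a0^3*a2^2*a3*s2^2*f000 + a0^3*a2^2*a3*s1*s2*f000 + (-1 : ℂ)*a0^3*a2^2*a3*s1^2*f000 + (1/3 : ℂ)*a0^3*a2^4*a3*f000 + a0^3*a1*a3^2*f001 + a0^3*a1*a3^2*f010 + a0^3*a1*a3^2*f100 + (-1 : ℂ)*a0^3*a1*a3^2*s3^2*f000 + a0^3*a1*a3^2*s2*s3*f000 + (-1 : ℂ)*a0^3*a1*a3^2*s2^2*f000 + a0^3*a1*a3^2*s1*s2*f000 + (-1 : ℂ)*a0^3*a1*a3^2*s1^2*f000 + (1/3 : ℂ)*a0^3*a1*a3^4*f000 + (-1 : ℂ)*a0^3*a1*a2^2*f001 + (-1 : ℂ)*a0^3*a1*a2^2*f010 + (-1 : ℂ)*a0^3*a1*a2^2*f100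 + a0^3*a1*a2^2*s3^2*f000 + (-1 : ℂ)*a0^3*a1*a2^2*s2*s3*f000 + a0^3*a1*a2^2*s2^2*f000 + (-1 : ℂ)*a0^3*a1*a2^2*s1*s2*f000 + a0^3*a1*a2^2*s1^2*f000 + (-1/3 : ℂ)*a0^3*a1*a2^4*f000 + (-1 : ℂ)*a0^3*a1^2*a3*f001 + (-1 : ℂ)*a0^3*a1^2*a3*f010 + (-1 : ℂ)*a0^3*a1^2*a3*f100 + a0^3*a1^2*a3*s3^2*f000 + (-1 : ℂ)*a0^3*a1^2*a3*s2*s3*f000 + a0^3*a1^2*a3*s2^2*f000 + (-1 : ℂ)*a0^3*a1^2*a3*s1*s2*f000 + a0^3*a1^2*a3*s1^2*f000 + a0^3*a1^2*a2*f001 + a0^3*a1^2*a2*f010 + a0^3*a1^2*a2*f100 + (-1 : ℂ)*a0^3*a1^2*a2*s3^2*f000 + a0^3*a1^2*a2*s2*s3*f000 + (-1 : ℂ)*a0^3*a1^2*a2*s2^2*f000 + a0^3*a1^2*a2*s1*s2*f000 + (-1 : ℂ)*a0^3*a1^2*a2*s1^2*f000 + (-1/3 : ℂ)*a0^3*a1^4*a3*f000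 + (1/3 : ℂ)*a0^3*a1^4*a2*f000 + (-1/2 : ℂ)*a0^4*a2*a3^2*s2*f000 + (1/3 : ℂ)*a0^4*a2*a3^3*f000 + (1/2 : ℂ)*a0^4*a2^2*a3*s2*f000 + (-1/3 : ℂ)*a0^4*a2^3*a3*f000 + (1/2 : ℂ)*a0^4*a1*a3^2*s2*f000 + (-1/3 : ℂ)*a0^4*a1*a3^3*f000 + (-1/2 : ℂ)*a0^4*a1*a2^2*s2*f000 + (1/3 : ℂ)*a0^4*a1*a2^3*f000 + (-1/2 : ℂ)*a0^4*a1^2*a3*s2*f000 + (1/2 : ℂ)*a0^4*a1^2*a2*s2*f000 + (1/3 : ℂ)*a0^4*a1^3*a3*f000 + (-1/3 : ℂ)*a0^4*a1^3*a2*f000 + (-2/3 : ℂ)*a0^5*a2*a3^2*f000 + (2/3 : ℂ)*a0^5*a2^2*a3*f000 + (2/3 : ℂ)*a0^5*a1*a3^2*f000 + (-2/3 : ℂ)*a0^5*a1*a2^2*f000 + (-2/3 : ℂ)*a0^5*a1^2*a3*f000 + (2/3 : ℂ)*a0^5*a1^2*a2*f000) * hsum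
    + (-((-1 : ℂ)*a0*a2*a3^2*s2 + a0*a2^2*a3*s2 + a0*a1*a3^2*s2 + (-1 : ℂ)*a0*a1*a2^2*s2 + (-1 : ℂ)*a0*a1^2*a3*s2 + a0*a1^2*a2*s2 + (-1 : ℂ)*a0^2*a2*a3^2 + a0^2*a2^2*a3 + a0^2*a1*a3^2 + (-1 : ℂ)*a0^2*a1*a2^2 + (-1 : ℂ)*a0^2*a1^2*a3 + a0^2*a1^2*a2)) * key0
    + (-(a1*a2*a3^2*s2 + (-1 : ℂ)*a1*a2^2*a3*s2 + a1^2*a2*a3^2 + (-1 : ℂ)*a1^2*a2^2*a3 + (-1 : ℂ)*a0*a1*a3^2*s2 + a0*a1*a2^2*s2 + (-1 : ℂ)*a0*a1^2*a3^2 + a0*a1^2*a2^2 + a0^2*a1*a3*s2 + (-1 : ℂ)*a0^2*a1*a2*s2 + a0^2*a1^2*a3 + (-1 : ℂ)*a0^2*a1^2*a2)) * key1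
    + (-((-1 : ℂ)*a1*a2*a3^2*s2 + (-1 : ℂ)*a1*a2^2*a3^2 + a1^2*a2*a3*s2 + a1^2*a2^2*a3 + a0*a2*a3^2*s2 + a0*a2^2*a3^2 + (-1 : ℂ)*a0*a1^2*a2*s2 + (-1 : ℂ)*a0*a1^2*a2^2 + (-1 : ℂ)*a0^2*a2*a3*s2 + (-1 : ℂ)*a0^2*a2^2*a3 + a0^2*a1*a2*s2 + a0^2*a1*a2^2)) * key2
    + (-(a1*a2^2*a3*s2 + a1*a2^2*a3^2 + (-1 : ℂ)*a1^2*a2*a3*s2 + (-1 : ℂ)*a1^2*a2*a3^2 + (-1 : ℂ)*a0*a2^2*a3*s2 + (-1 : ℂ)*a0*a2^2*a3^2 + a0*a1^2*a3*s2 + a0*a1^2*a3^2 + a0^2*a2*a3*s2 + a0^2*a2*a3^2 + (-1 : ℂ)*a0^2*a1*a3*s2 + (-1 : ℂ)*a0^2*a1*a3^2)) * key3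

/-- Relation (3.6) of Stade–Trinh:
`C_a(−s_3,s_2)·T(s_1,s_2,s_3) − (s_1+s_2−s_3)·T(s_1,s_2+1,s_3) − 2s_2·T(s_1,s_2,s_3+1) = 0`. -/
theorem stmt3 (F : (Fin 4 → ℂ) → ℂ → ℂ → ℂ → ℂ)
    (hperm : PermInvariant F) (hrec : GL4Recurrence F)
    (a : Fin 4 → ℂ) (hsum : a 0 + a 1 + a 2 + a 3 = 0) (hinj : Function.Injective a)
    (s1 s2 s3 : ℂ) (hs1 : ∀ k : Fin 4, s1 ≠ -a k) (hs3 : ∀ k : Fin 4, s3 ≠ a k) :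
    Crec a (-s3) s2 * F a s1 s2 s3 - (s1 + s2 - s3) * F a s1 (s2 + 1) s3
      - 2 * s2 * F a s1 s2 (s3 + 1) = 0 := by
  have key0 := hrec a hsum s1 s2 s3
  have key1 :
      (-s1 - a 1) * (s1 - s2 - a 1) * (s2 - s3 - a 1) * (s3 - a 1) * F a s1 s2 s3
        + (s2 - s3 - a 1) * (s3 - a 1) * F a (s1 + 1) s2 s3
        + (-s1 - a 1) * (s3 - a 1) * F a s1 (s2 + 1) s3
        + (-s1 - a 1) * (s1 - s2 - a 1) * F a s1 s2 (s3 + 1)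
        + F a (s1 + 1) s2 (s3 + 1) = 0 := by
    have e0 : (a ∘ Equiv.swap (0 : Fin 4) 1) 0 = a 1 := by
      simp [Equiv.swap_apply_left]
    have hsb : (a ∘ Equiv.swap (0 : Fin 4) 1) 0 + (a ∘ Equiv.swap (0 : Fin 4) 1) 1
        + (a ∘ Equiv.swap (0 : Fin 4) 1) 2 + (a ∘ Equiv.swap (0 : Fin 4) 1) 3 = 0 := by
      simp only [Function.comp_apply, Equiv.swap_apply_def]
      norm_num [show (1:Fin 4) ≠ 0 by decide, show (1:Fin 4) ≠ 2 by decide,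
        show (2:Fin 4) ≠ 0 by decide, show (3:Fin 4) ≠ 0 by decide,
        show (3:Fin 4) ≠ 2 by decide, show (3:Fin 4) ≠ 1 by decide,
        show (2:Fin 4) ≠ 1 by decide, show (1:Fin 4) ≠ 3 by decide,
        show (2:Fin 4) ≠ 3 by decide]
      linear_combination hsum
    have h := hrec (a ∘ Equiv.swap (0 : Fin 4) 1) hsb s1 s2 s3
    rw [e0] at h
    simpa only [hperm (Equiv.swap (0 : Fin 4) 1) a hsum] using h
  have key2 :
      (-s1 - a 2) * (s1 - s2 - a 2) * (s2 - s3 - a 2) * (s3 - a 2) * F a s1 s2 s3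
        + (s2 - s3 - a 2) * (s3 - a 2) * F a (s1 + 1) s2 s3
        + (-s1 - a 2) * (s3 - a 2) * F a s1 (s2 + 1) s3
        + (-s1 - a 2) * (s1 - s2 - a 2) * F a s1 s2 (s3 + 1)
        + F a (s1 + 1) s2 (s3 + 1) = 0 := by
    have e0 : (a ∘ Equiv.swap (0 : Fin 4) 2) 0 = a 2 := by
      simp [Equiv.swap_apply_left]
    have hsb : (a ∘ Equiv.swap (0 : Fin 4) 2) 0 + (a ∘ Equiv.swap (0 : Fin 4) 2) 1
        + (a ∘ Equiv.swap (0 : Fin 4) 2) 2 + (a ∘ Equiv.swap (0 : Fin 4) 2) 3 = 0 := by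
      simp only [Function.comp_apply, Equiv.swap_apply_def]
      norm_num [show (1:Fin 4) ≠ 0 by decide, show (1:Fin 4) ≠ 2 by decide,
        show (2:Fin 4) ≠ 0 by decide, show (3:Fin 4) ≠ 0 by decide,
        show (3:Fin 4) ≠ 2 by decide, show (3:Fin 4) ≠ 1 by decide,
        show (2:Fin 4) ≠ 1 by decide, show (1:Fin 4) ≠ 3 by decide,
        show (2:Fin 4) ≠ 3 by decide]
      linear_combination hsum
    have h := hrec (a ∘ Equiv.swap (0 : Fin 4) 2) hsb s1 s2 s3
    rw [e0] at h
    simpa only [hperm (Equiv.swap (0 : Fin 4) 2) a hsum] using h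
  have key3 :
      (-s1 - a 3) * (s1 - s2 - a 3) * (s2 - s3 - a 3) * (s3 - a 3) * F a s1 s2 s3
        + (s2 - s3 - a 3) * (s3 - a 3) * F a (s1 + 1) s2 s3
        + (-s1 - a 3) * (s3 - a 3) * F a s1 (s2 + 1) s3
        + (-s1 - a 3) * (s1 - s2 - a 3) * F a s1 s2 (s3 + 1)
        + F a (s1 + 1) s2 (s3 + 1) = 0 := by
    have e0 : (a ∘ Equiv.swap (0 : Fin 4) 3) 0 = a 3 := by
      simp [Equiv.swap_apply_left]
    have hsb : (a ∘ Equiv.swap (0 : Fin 4) 3) 0 + (a ∘ Equiv.swap (0 : Fin 4) 3) 1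
        + (a ∘ Equiv.swap (0 : Fin 4) 3) 2 + (a ∘ Equiv.swap (0 : Fin 4) 3) 3 = 0 := by
      simp only [Function.comp_apply, Equiv.swap_apply_def]
      norm_num [show (1:Fin 4) ≠ 0 by decide, show (1:Fin 4) ≠ 2 by decide,
        show (2:Fin 4) ≠ 0 by decide, show (3:Fin 4) ≠ 0 by decide,
        show (3:Fin 4) ≠ 2 by decide, show (3:Fin 4) ≠ 1 by decide,
        show (2:Fin 4) ≠ 1 by decide, show (1:Fin 4) ≠ 3 by decide,
        show (2:Fin 4) ≠ 3 by decide]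
      linear_combination hsum
    have h := hrec (a ∘ Equiv.swap (0 : Fin 4) 3) hsb s1 s2 s3
    rw [e0] at h
    simpa only [hperm (Equiv.swap (0 : Fin 4) 3) a hsum] using h
  have hne : ∀ i j : Fin 4, i ≠ j → a i - a j ≠ 0 := fun i j h =>
    sub_ne_zero.2 (fun e => h (hinj e))
  have hV : (a 0 - a 1) * (a 0 - a 2) * (a 0 - a 3) * (a 1 - a 2) * (a 1 - a 3)
      * (a 2 - a 3) ≠ 0 :=
    mul_ne_zero (mul_ne_zero (mul_ne_zero (mul_ne_zero (mul_ne_zero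
      (hne 0 1 (by decide)) (hne 0 2 (by decide))) (hne 0 3 (by decide)))
      (hne 1 2 (by decide))) (hne 1 3 (by decide))) (hne 2 3 (by decide))
  have main := stmt3_aux (a 0) (a 1) (a 2) (a 3) s1 s2 s3 (F a s1 s2 s3)
    (F a (s1 + 1) s2 s3) (F a s1 (s2 + 1) s3) (F a s1 s2 (s3 + 1))
    (F a (s1 + 1) s2 (s3 + 1)) hsum key0 key1 key2 key3
  rcases mul_eq_zero.mp main with h | h
  · exact absurd h hV
  · rw [Crec]
    linear_combination h
end

section
/- Assume (i) and (ii) below hold for F. Let a = (a_1,a_2,a_3,a_4) have a_1+a_2+a_3+a_4 = 0 with a_1,a_2,a_3,a_4 pairwise distinct, and let (s_1,s_2,s_3) ∈ ℂ³ satisfy s_1 ≠ −a_k and s_3 ≠ a_k for all 1 ≤ k ≤ 4, and s_2 ≠ 0. Then C_a(s_1, −s_2)·F(a; s_1,s_2,s_3) + 2s_2·F(a; s_1+1,s_2,s_3) + (s_2+s_3−s_1)·F(a; s_1,s_2+1,s_3) = 0. -/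
open Finset

/-- Relation (3.11) of Stade–Trinh:
`C_a(s_1,−s_2)·T(s_1,s_2,s_3) + 2s_2·T(s_1+1,s_2,s_3) + (s_2+s_3−s_1)·T(s_1,s_2+1,s_3) = 0`. -/
theorem stmt4 (F : (Fin 4 → ℂ) → ℂ → ℂ → ℂ → ℂ)
    (hperm : PermInvariant F) (hrec : GL4Recurrence F)
    (a : Fin 4 → ℂ) (hsum : a 0 + a 1 + a 2 + a 3 = 0) (hinj : Function.Injective a)
    (s1 s2 s3 : ℂ) (hs1 : ∀ k : Fin 4, s1 ≠ -a k) (hs3 : ∀ k : Fin 4, s3 ≠ a k)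
    (hs2 : s2 ≠ 0) :
    Crec a s1 (-s2) * F a s1 s2 s3 + 2 * s2 * F a (s1 + 1) s2 s3
      + (s2 + s3 - s1) * F a s1 (s2 + 1) s3 = 0 := by

  -- Recurrence with `a k` in position 0, for k = 0, 1, 2.
  have hb : ∀ k : Fin 4,
      (-s1 - a k) * (s1 - s2 - a k) * (s2 - s3 - a k) * (s3 - a k) * F a s1 s2 s3
        + (s2 - s3 - a k) * (s3 - a k) * F a (s1 + 1) s2 s3
        + (-s1 - a k) * (s3 - a k) * F a s1 (s2 + 1) s3
        + (-s1 - a k) * (s1 - s2 - a k) * F a s1 s2 (s3 + 1)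
        + F a (s1 + 1) s2 (s3 + 1) = 0 := by
    intro k
    have hb0 : (a ∘ Equiv.swap 0 k) 0 + (a ∘ Equiv.swap 0 k) 1
        + (a ∘ Equiv.swap 0 k) 2 + (a ∘ Equiv.swap 0 k) 3 = 0 := by
      fin_cases k <;>
        simp only [Function.comp_apply, Equiv.swap_apply_def, Fin.ext_iff,
          Fin.isValue, Fin.val_zero, Fin.val_one, show ((2:Fin 4):ℕ) = 2 from rfl,
          show ((3:Fin 4):ℕ) = 3 from rfl,
          show (⟨2, by norm_num⟩ : Fin 4) = 2 from rfl,
          show (⟨3, by norm_num⟩ : Fin 4) = 3 from rfl] <;> norm_num <;>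
        linear_combination hsum
    have hF : ∀ t1 t2 t3 : ℂ, F (a ∘ Equiv.swap 0 k) t1 t2 t3 = F a t1 t2 t3 :=
      hperm (Equiv.swap 0 k) a hsum
    have h0 : (a ∘ Equiv.swap 0 k) 0 = a k := by
      simp [Equiv.swap_apply_left]
    have := hrec (a ∘ Equiv.swap 0 k) hb0 s1 s2 s3
    rw [h0, hF, hF, hF, hF, hF] at this
    exact this
  have E0 := hb 0
  have E1 := hb 1
  have E2 := hb 2
  have ha3 : a 3 = -(a 0 + a 1 + a 2) := by linear_combination hsum
  have h01 : a 0 - a 1 ≠ 0 := sub_ne_zero.mpr (fun h => by simpa using hinj h)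
  have h02 : a 0 - a 2 ≠ 0 := sub_ne_zero.mpr (fun h => by simpa using hinj h)
  have h12 : a 1 - a 2 ≠ 0 := sub_ne_zero.mpr (fun h => by simpa using hinj h)
  have key : (a 0 - a 1) * ((a 0 - a 2) * ((a 1 - a 2) *
      (Crec a s1 (-s2) * F a s1 s2 s3 + 2 * s2 * F a (s1 + 1) s2 s3
        + (s2 + s3 - s1) * F a s1 (s2 + 1) s3))) = 0 := by
    simp only [Crec]
    rw [ha3]
    linear_combination ((s2 + a 1 + a 2) * (a 1 - a 2)) * E0
      - ((s2 + a 0 + a 2) * (a 0 - a 2)) * E1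
      + ((s2 + a 0 + a 1) * (a 0 - a 1)) * E2
  have := (mul_eq_zero.mp key).resolve_left h01
  have := (mul_eq_zero.mp this).resolve_left h02
  exact (mul_eq_zero.mp this).resolve_left h12
end

section
/- Assume (i) and (ii) below hold for F. Let a = (a_1,a_2,a_3,a_4) have a_1+a_2+a_3+a_4 = 0 with a_1,a_2,a_3,a_4 pairwise distinct, and let (s_1,s_2,s_3) ∈ ℂ³ satisfy s_1 ≠ −a_k for all 1 ≤ k ≤ 4. Then F(a; s_1,s_2,s_3) = [B(s_1,s_2,s_3)·F(a; s_1+1,s_2,s_3) + F(a; s_1+1,s_2,s_3+1)] / Π_{k=1}^{4}(s_1+a_k). -/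
open Finset

/-- Proposition 3.1(a) of Stade–Trinh:
`T(s) = [B(s_1,s_2,s_3)·T(s_1+1,s_2,s_3) + T(s_1+1,s_2,s_3+1)] / ∏_{k=1}^4 (s_1+a_k)`. -/
theorem stmt5 (F : (Fin 4 → ℂ) → ℂ → ℂ → ℂ → ℂ)
    (hperm : PermInvariant F) (hrec : GL4Recurrence F)
    (a : Fin 4 → ℂ) (hsum : a 0 + a 1 + a 2 + a 3 = 0) (hinj : Function.Injective a)
    (s1 s2 s3 : ℂ) (hs1 : ∀ k : Fin 4, s1 ≠ -a k) :
    F a s1 s2 s3 =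
      (Brec s1 s2 s3 * F a (s1 + 1) s2 s3 + F a (s1 + 1) s2 (s3 + 1)) /
        ∏ k : Fin 4, (s1 + a k) := by
  have hswap : ∀ k : Fin 4,
      ((a ∘ Equiv.swap 0 k) 0 + (a ∘ Equiv.swap 0 k) 1 + (a ∘ Equiv.swap 0 k) 2
        + (a ∘ Equiv.swap 0 k) 3 = 0) ∧ (a ∘ Equiv.swap 0 k) 0 = a k := by
    intro k
    fin_cases k <;>
      refine ⟨?_, ?_⟩ <;>
      simp [Equiv.swap_apply_def] <;>
      linear_combination hsum
  have H : ∀ k : Fin 4,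
      (-s1 - a k) * (s1 - s2 - a k) * (s2 - s3 - a k) * (s3 - a k) * F a s1 s2 s3
        + (s2 - s3 - a k) * (s3 - a k) * F a (s1 + 1) s2 s3
        + (-s1 - a k) * (s3 - a k) * F a s1 (s2 + 1) s3
        + (-s1 - a k) * (s1 - s2 - a k) * F a s1 s2 (s3 + 1)
        + F a (s1 + 1) s2 (s3 + 1) = 0 := by
    intro k
    obtain ⟨hb, h0k⟩ := hswap k
    have h := hrec (a ∘ Equiv.swap 0 k) hb s1 s2 s3
    rw [h0k] at h
    simpa only [hperm (Equiv.swap 0 k) a hsum] using h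
  have hp : ∀ k : Fin 4, s1 + a k ≠ 0 := by
    intro k h
    exact hs1 k (by linear_combination h)
  have hd : ∀ i j : Fin 4, i ≠ j → a i - a j ≠ 0 := by
    intro i j hij h
    exact hij (hinj (by linear_combination h))
  have hprod : (∏ k : Fin 4, (s1 + a k)) ≠ 0 := by
    rw [Fin.prod_univ_four]
    exact mul_ne_zero (mul_ne_zero (mul_ne_zero (hp 0) (hp 1)) (hp 2)) (hp 3)
  rw [eq_div_iff hprod, Fin.prod_univ_four]
  unfold Brec
  have hV : (a 0 - a 1) * (a 0 - a 2) * (a 0 - a 3) * (a 1 - a 2) * (a 1 - a 3)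
      * (a 2 - a 3) ≠ 0 := by
    exact mul_ne_zero (mul_ne_zero (mul_ne_zero (mul_ne_zero (mul_ne_zero
      (hd 0 1 (by decide)) (hd 0 2 (by decide))) (hd 0 3 (by decide)))
      (hd 1 2 (by decide))) (hd 1 3 (by decide))) (hd 2 3 (by decide))
  apply mul_left_cancel₀ hV
  linear_combination
    ((s1 + a 1) * (s1 + a 2) * (s1 + a 3) * (a 1 - a 2) * (a 1 - a 3) * (a 2 - a 3)) * H 0
    - ((s1 + a 0) * (s1 + a 2) * (s1 + a 3) * (a 0 - a 2) * (a 0 - a 3) * (a 2 - a 3)) * H 1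
    + ((s1 + a 0) * (s1 + a 1) * (s1 + a 3) * (a 0 - a 1) * (a 0 - a 3) * (a 1 - a 3)) * H 2
    - ((s1 + a 0) * (s1 + a 1) * (s1 + a 2) * (a 0 - a 1) * (a 0 - a 2) * (a 1 - a 2)) * H 3
end

section
/- Assume (i) and (ii) below hold for F. Let a = (a_1,a_2,a_3,a_4) have a_1+a_2+a_3+a_4 = 0 with a_1,a_2,a_3,a_4 pairwise distinct, and let (s_1,s_2,s_3) ∈ ℂ³ satisfy s_1 ≠ −a_k for all 1 ≤ k ≤ 4 and s_2 ≠ 0. Then F(a; s_1,s_2,s_3) = [C_a(s_1,s_2)·F(a; s_1+1,s_2,s_3) − (1+s_1+s_2−s_3)·F(a; s_1+1,s_2+1,s_3)] / (2s_2·Π_{k=1}^{4}(s_1+a_k)). -/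
open Finset

/-- Proposition 3.1(b) of Stade–Trinh:
`T(s) = [C_a(s_1,s_2)·T(s_1+1,s_2,s_3) − (1+s_1+s_2−s_3)·T(s_1+1,s_2+1,s_3)] / (2s_2 ∏_{k=1}^4 (s_1+a_k))`. -/
theorem stmt6 (F : (Fin 4 → ℂ) → ℂ → ℂ → ℂ → ℂ)
    (hperm : PermInvariant F) (hrec : GL4Recurrence F)
    (a : Fin 4 → ℂ) (hsum : a 0 + a 1 + a 2 + a 3 = 0) (hinj : Function.Injective a)
    (s1 s2 s3 : ℂ) (hs1 : ∀ k : Fin 4, s1 ≠ -a k) (hs2 : s2 ≠ 0) :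
    F a s1 s2 s3 =
      (Crec a s1 s2 * F a (s1 + 1) s2 s3
          - (1 + s1 + s2 - s3) * F a (s1 + 1) (s2 + 1) s3) /
        (2 * s2 * ∏ k : Fin 4, (s1 + a k)) := by

  -- recurrence with `a k` in place of `a 0`, for every `k`
  have key : ∀ (k : Fin 4) (t1 t2 t3 : ℂ),
      (-t1 - a k) * (t1 - t2 - a k) * (t2 - t3 - a k) * (t3 - a k) * F a t1 t2 t3
        + (t2 - t3 - a k) * (t3 - a k) * F a (t1 + 1) t2 t3
        + (-t1 - a k) * (t3 - a k) * F a t1 (t2 + 1) t3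
        + (-t1 - a k) * (t1 - t2 - a k) * F a t1 t2 (t3 + 1)
        + F a (t1 + 1) t2 (t3 + 1) = 0 := by
    intro k t1 t2 t3
    have hsumσ : (a ∘ Equiv.swap 0 k) 0 + (a ∘ Equiv.swap 0 k) 1
        + (a ∘ Equiv.swap 0 k) 2 + (a ∘ Equiv.swap 0 k) 3 = 0 := by
      have h2 : a (Equiv.swap 0 k 0) + a (Equiv.swap 0 k 1) + a (Equiv.swap 0 k 2)
          + a (Equiv.swap 0 k 3) = a 0 + a 1 + a 2 + a 3 := by
        simpa [Fin.sum_univ_four] using Equiv.sum_comp (Equiv.swap 0 k) a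
      exact h2.trans hsum
    have h := hrec (a ∘ Equiv.swap 0 k) hsumσ t1 t2 t3
    have hF : ∀ x y z : ℂ, F (a ∘ Equiv.swap 0 k) x y z = F a x y z :=
      hperm (Equiv.swap 0 k) a hsum
    simp only [hF] at h
    simpa [Function.comp, Equiv.swap_apply_left] using h
  have H0 := key 0 s1 s2 s3
  have H1 := key 1 s1 s2 s3
  have H2 := key 2 s1 s2 s3
  have H3 := key 3 s1 s2 s3
  have H0' := key 0 (s1 + 1) s2 s3
  have H1' := key 1 (s1 + 1) s2 s3
  have H2' := key 2 (s1 + 1) s2 s3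
  have H3' := key 3 (s1 + 1) s2 s3
  have hne : ∀ i j : Fin 4, i ≠ j → a i - a j ≠ 0 := fun i j hij =>
    sub_ne_zero.mpr fun h => hij (hinj h)
  have hsa : ∀ k : Fin 4, s1 + a k ≠ 0 := fun k => by
    simpa [sub_neg_eq_add] using sub_ne_zero.mpr (hs1 k)
  have hprod : (∏ k : Fin 4, (s1 + a k))
      = (s1 + a 0) * (s1 + a 1) * (s1 + a 2) * (s1 + a 3) := by
    simp [Fin.prod_univ_four]
  have hden : 2 * s2 * ((s1 + a 0) * (s1 + a 1) * (s1 + a 2) * (s1 + a 3)) ≠ 0 := by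
    refine mul_ne_zero (mul_ne_zero two_ne_zero hs2) ?_
    exact mul_ne_zero (mul_ne_zero (mul_ne_zero (hsa 0) (hsa 1)) (hsa 2)) (hsa 3)
  rw [hprod, eq_div_iff hden]
  unfold Crec
  have hV : (a 0 - a 1) * (a 0 - a 2) * (a 0 - a 3) * (a 1 - a 2) * (a 1 - a 3)
      * (a 2 - a 3) ≠ 0 := by
    refine mul_ne_zero (mul_ne_zero (mul_ne_zero (mul_ne_zero (mul_ne_zero
      (hne 0 1 (by decide)) (hne 0 2 (by decide))) (hne 0 3 (by decide)))
      (hne 1 2 (by decide))) (hne 1 3 (by decide))) (hne 2 3 (by decide))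
  apply mul_left_cancel₀ hV
  linear_combination
      (2 * s2 * ((a 1 - a 2) * (a 1 - a 3) * (a 2 - a 3))
        * ((s1 + a 1) * (s1 + a 2) * (s1 + a 3))) * H0
    + (2 * s2 * (-((a 0 - a 2) * (a 0 - a 3) * (a 2 - a 3)))
        * ((s1 + a 0) * (s1 + a 2) * (s1 + a 3))) * H1
    + (2 * s2 * ((a 0 - a 1) * (a 0 - a 3) * (a 1 - a 3))
        * ((s1 + a 0) * (s1 + a 1) * (s1 + a 3))) * H2
    + (2 * s2 * (-((a 0 - a 1) * (a 0 - a 2) * (a 1 - a 2)))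
        * ((s1 + a 0) * (s1 + a 1) * (s1 + a 2))) * H3
    + (((a 1 - a 2) * (a 1 - a 3) * (a 2 - a 3))
        * (a 1 * a 2 + a 1 * a 3 + a 2 * a 3 - s2 * (a 1 + a 2 + a 3))) * H0'
    + ((-((a 0 - a 2) * (a 0 - a 3) * (a 2 - a 3)))
        * (a 0 * a 2 + a 0 * a 3 + a 2 * a 3 - s2 * (a 0 + a 2 + a 3))) * H1'
    + (((a 0 - a 1) * (a 0 - a 3) * (a 1 - a 3))
        * (a 0 * a 1 + a 0 * a 3 + a 1 * a 3 - s2 * (a 0 + a 1 + a 3))) * H2'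
    + ((-((a 0 - a 1) * (a 0 - a 2) * (a 1 - a 2)))
        * (a 0 * a 1 + a 0 * a 2 + a 1 * a 2 - s2 * (a 0 + a 1 + a 2))) * H3'
    + ((a 0 - a 1) * (a 0 - a 2) * (a 0 - a 3) * (a 1 - a 2) * (a 1 - a 3) * (a 2 - a 3)
        * ((1/3 : ℂ) * (a 0 ^ 2 + a 1 ^ 2 + a 2 ^ 2 + a 3 ^ 2
            - a 0 * a 1 - a 0 * a 2 - a 0 * a 3 - a 1 * a 2 - a 1 * a 3 - a 2 * a 3)
          + (1/2 : ℂ) * s2 * (a 0 + a 1 + a 2 + a 3))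
        * F a (s1 + 1) s2 s3) * hsum
end

section
/- Assume (i) and (ii) below hold for F. Let a = (a_1,a_2,a_3,a_4) have a_1+a_2+a_3+a_4 = 0 with a_1,a_2,a_3,a_4 pairwise distinct, and let (s_1,s_2,s_3) ∈ ℂ³ satisfy s_1 ≠ −a_k for all 1 ≤ k ≤ 4, s_2 ≠ 0, and s_2 ≠ −a_j−a_k for all 1 ≤ j < k ≤ 4. Then F(a; s_1,s_2,s_3) = [2s_2(1+s_1+s_2−s_3)·F(a; s_1+1,s_2+1,s_3) + (s_2+s_3−s_1)·C_a(s_1,s_2)·F(a; s_1,s_2+1,s_3)] / Π_{1≤j<k≤4}(s_2+a_j+a_k). -/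
open Finset

set_option maxHeartbeats 1000000 in
/-- Proposition 3.2 of Stade–Trinh. -/
theorem stmt7 (F : (Fin 4 → ℂ) → ℂ → ℂ → ℂ → ℂ)
    (hperm : PermInvariant F) (hrec : GL4Recurrence F)
    (a : Fin 4 → ℂ) (hsum : a 0 + a 1 + a 2 + a 3 = 0) (hinj : Function.Injective a)
    (s1 s2 s3 : ℂ) (hs1 : ∀ k : Fin 4, s1 ≠ -a k) (hs2 : s2 ≠ 0)
    (hs2' : ∀ j k : Fin 4, j < k → s2 ≠ -a j - a k) :
    F a s1 s2 s3 =
      (2 * s2 * (1 + s1 + s2 - s3) * F a (s1 + 1) (s2 + 1) s3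
          + (s2 + s3 - s1) * Crec a s1 s2 * F a s1 (s2 + 1) s3) /
        ∏ p ∈ Finset.univ.filter (fun p : Fin 4 × Fin 4 => p.1 < p.2),
          (s2 + a p.1 + a p.2) := by
  have h3 : a 3 = -(a 0 + a 1 + a 2) := by linear_combination hsum
  have key : ∀ k : Fin 4, ∀ t1 t2 t3 : ℂ,
      (-t1 - a k) * (t1 - t2 - a k) * (t2 - t3 - a k) * (t3 - a k) * F a t1 t2 t3
        + (t2 - t3 - a k) * (t3 - a k) * F a (t1 + 1) t2 t3
        + (-t1 - a k) * (t3 - a k) * F a t1 (t2 + 1) t3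
        + (-t1 - a k) * (t1 - t2 - a k) * F a t1 t2 (t3 + 1)
        + F a (t1 + 1) t2 (t3 + 1) = 0 := by
    intro k t1 t2 t3
    have hb : (a ∘ Equiv.swap 0 k) 0 + (a ∘ Equiv.swap 0 k) 1 + (a ∘ Equiv.swap 0 k) 2
        + (a ∘ Equiv.swap 0 k) 3 = 0 := by
      fin_cases k <;>
        simp [Function.comp, Equiv.swap_apply_def] <;>
        linear_combination hsum
    have h := hrec _ hb t1 t2 t3
    simp only [hperm (Equiv.swap 0 k) a hsum] at h
    have h0 : (a ∘ Equiv.swap 0 k) 0 = a k := by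
      simp [Function.comp, Equiv.swap_apply_left]
    rw [h0] at h
    exact h
  have k3 : ∀ t1 t2 t3 : ℂ,
      (-t1 - -(a 0 + a 1 + a 2)) * (t1 - t2 - -(a 0 + a 1 + a 2)) *
          (t2 - t3 - -(a 0 + a 1 + a 2)) * (t3 - -(a 0 + a 1 + a 2)) * F a t1 t2 t3
        + (t2 - t3 - -(a 0 + a 1 + a 2)) * (t3 - -(a 0 + a 1 + a 2)) * F a (t1 + 1) t2 t3
        + (-t1 - -(a 0 + a 1 + a 2)) * (t3 - -(a 0 + a 1 + a 2)) * F a t1 (t2 + 1) t3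
        + (-t1 - -(a 0 + a 1 + a 2)) * (t1 - t2 - -(a 0 + a 1 + a 2)) * F a t1 t2 (t3 + 1)
        + F a (t1 + 1) t2 (t3 + 1) = 0 := by
    intro t1 t2 t3
    have h := key 3 t1 t2 t3
    rw [h3] at h
    exact h
  have hne : ∀ i j : Fin 4, i ≠ j → a i - a j ≠ 0 := fun i j hij =>
    sub_ne_zero.mpr fun h => hij (hinj h)
  have hΔ : (a 0 - a 1) * (a 0 - a 2) * (a 0 - a 3) * (a 1 - a 2) * (a 1 - a 3) * (a 2 - a 3) ≠ 0 :=
    mul_ne_zero (mul_ne_zero (mul_ne_zero (mul_ne_zero (mul_ne_zero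
      (hne 0 1 (by decide)) (hne 0 2 (by decide))) (hne 0 3 (by decide)))
      (hne 1 2 (by decide))) (hne 1 3 (by decide))) (hne 2 3 (by decide))
  rw [h3] at hΔ
  have relI : ∀ t1 t2 t3 : ℂ,
      F a (t1 + 1) t2 t3 + F a t1 (t2 + 1) t3 + F a t1 t2 (t3 + 1)
        + ((- 1 * t3 ^ 2 + 1 * t2 * t3 - 1 * t2 ^ 2 + 1 * t1 * t2 - 1 * t1 ^ 2) - (- 1 * a 2 ^ 2 - 1 * a 1 * a 2 - 1 * a 1 ^ 2 - 1 * a 0 * a 2 - 1 * a 0 * a 1 - 1 * a 0 ^ 2)) * F a t1 t2 t3 = 0 := by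
    intro t1 t2 t3
    apply mul_left_cancel₀ hΔ
    linear_combination
        (- 2 * a 0 * a 2 ^ 3 - 3 * a 0 * a 1 * a 2 ^ 2 + 3 * a 0 * a 1 ^ 2 * a 2 + 2 * a 0 * a 1 ^ 3 - 3 * a 0 ^ 2 * a 2 ^ 2 + 3 * a 0 ^ 2 * a 1 ^ 2 - 1 * a 0 ^ 3 * a 2 + 1 * a 0 ^ 3 * a 1) * (key 0 t1 t2 t3) +
        (2 * a 1 * a 2 ^ 3 + 3 * a 1 ^ 2 * a 2 ^ 2 + 1 * a 1 ^ 3 * a 2 + 3 * a 0 * a 1 * a 2 ^ 2 - 1 * a 0 * a 1 ^ 3 - 3 * a 0 ^ 2 * a 1 * a 2 - 3 * a 0 ^ 2 * a 1 ^ 2 - 2 * a 0 ^ 3 * a 1) * (key 1 t1 t2 t3) +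
        (- 1 * a 1 * a 2 ^ 3 - 3 * a 1 ^ 2 * a 2 ^ 2 - 2 * a 1 ^ 3 * a 2 + 1 * a 0 * a 2 ^ 3 - 3 * a 0 * a 1 ^ 2 * a 2 + 3 * a 0 ^ 2 * a 2 ^ 2 + 3 * a 0 ^ 2 * a 1 * a 2 + 2 * a 0 ^ 3 * a 2) * (key 2 t1 t2 t3) +
        (- 1 * a 1 * a 2 ^ 3 + 1 * a 1 ^ 3 * a 2 + 1 * a 0 * a 2 ^ 3 - 1 * a 0 * a 1 ^ 3 - 1 * a 0 ^ 3 * a 2 + 1 * a 0 ^ 3 * a 1) * (k3 t1 t2 t3)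
  have relII : ∀ t1 t2 t3 : ℂ,
      -t2 * F a (t1 + 1) t2 t3 + (t1 - t3) * F a t1 (t2 + 1) t3 + t2 * F a t1 t2 (t3 + 1)
        + ((- 1 * a 1 * a 2 ^ 2 - 1 * a 1 ^ 2 * a 2 - 1 * a 0 * a 2 ^ 2 - 2 * a 0 * a 1 * a 2 - 1 * a 0 * a 1 ^ 2 - 1 * a 0 ^ 2 * a 2 - 1 * a 0 ^ 2 * a 1) - (1 * t2 * t3 ^ 2 - 1 * t2 ^ 2 * t3 + 1 * t1 * t2 ^ 2 - 1 * t1 ^ 2 * t2)) * F a t1 t2 t3 = 0 := by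
    intro t1 t2 t3
    apply mul_left_cancel₀ hΔ
    linear_combination
        (2 * a 2 ^ 5 + 5 * a 1 * a 2 ^ 4 + 2 * a 1 ^ 2 * a 2 ^ 3 - 2 * a 1 ^ 3 * a 2 ^ 2 - 5 * a 1 ^ 4 * a 2 - 2 * a 1 ^ 5 + 5 * a 0 * a 2 ^ 4 + 8 * a 0 * a 1 * a 2 ^ 3 - 8 * a 0 * a 1 ^ 3 * a 2 - 5 * a 0 * a 1 ^ 4 + 4 * a 0 ^ 2 * a 2 ^ 3 + 3 * a 0 ^ 2 * a 1 * a 2 ^ 2 - 3 * a 0 ^ 2 * a 1 ^ 2 * a 2 - 4 * a 0 ^ 2 * a 1 ^ 3 + 1 * a 0 ^ 3 * a 2 ^ 2 - 1 * a 0 ^ 3 * a 1 ^ 2) * (key 0 t1 t2 t3) +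
        (- 2 * a 2 ^ 5 - 5 * a 1 * a 2 ^ 4 - 4 * a 1 ^ 2 * a 2 ^ 3 - 1 * a 1 ^ 3 * a 2 ^ 2 - 5 * a 0 * a 2 ^ 4 - 8 * a 0 * a 1 * a 2 ^ 3 - 3 * a 0 * a 1 ^ 2 * a 2 ^ 2 - 2 * a 0 ^ 2 * a 2 ^ 3 + 3 * a 0 ^ 2 * a 1 ^ 2 * a 2 + 1 * a 0 ^ 2 * a 1 ^ 3 + 2 * a 0 ^ 3 * a 2 ^ 2 + 8 * a 0 ^ 3 * a 1 * a 2 + 4 * a 0 ^ 3 * a 1 ^ 2 + 5 * a 0 ^ 4 * a 2 + 5 * a 0 ^ 4 * a 1 + 2 * a 0 ^ 5) * (key 1 t1 t2 t3) +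
        (1 * a 1 ^ 2 * a 2 ^ 3 + 4 * a 1 ^ 3 * a 2 ^ 2 + 5 * a 1 ^ 4 * a 2 + 2 * a 1 ^ 5 + 3 * a 0 * a 1 ^ 2 * a 2 ^ 2 + 8 * a 0 * a 1 ^ 3 * a 2 + 5 * a 0 * a 1 ^ 4 - 1 * a 0 ^ 2 * a 2 ^ 3 - 3 * a 0 ^ 2 * a 1 * a 2 ^ 2 + 2 * a 0 ^ 2 * a 1 ^ 3 - 4 * a 0 ^ 3 * a 2 ^ 2 - 8 * a 0 ^ 3 * a 1 * a 2 - 2 * a 0 ^ 3 * a 1 ^ 2 - 5 * a 0 ^ 4 * a 2 - 5 * a 0 ^ 4 * a 1 - 2 * a 0 ^ 5) * (key 2 t1 t2 t3) +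
        (1 * a 1 ^ 2 * a 2 ^ 3 - 1 * a 1 ^ 3 * a 2 ^ 2 - 1 * a 0 ^ 2 * a 2 ^ 3 + 1 * a 0 ^ 2 * a 1 ^ 3 + 1 * a 0 ^ 3 * a 2 ^ 2 - 1 * a 0 ^ 3 * a 1 ^ 2) * (k3 t1 t2 t3)
  have relIII : ∀ t1 t2 t3 : ℂ,
      t3 * (t2 - t3) * F a (t1 + 1) t2 t3 - t1 * t3 * F a t1 (t2 + 1) t3
        - t1 * (t1 - t2) * F a t1 t2 (t3 + 1) + F a (t1 + 1) t2 (t3 + 1)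
        + ((- 1 * t1 * t2 * t3 ^ 2 + 1 * t1 * t2 ^ 2 * t3 + 1 * t1 ^ 2 * t3 ^ 2 - 1 * t1 ^ 2 * t2 * t3) - (- 1 * a 0 * a 1 * a 2 ^ 2 - 1 * a 0 * a 1 ^ 2 * a 2 - 1 * a 0 ^ 2 * a 1 * a 2)) * F a t1 t2 t3 = 0 := by
    intro t1 t2 t3
    apply mul_left_cancel₀ hΔ
    linear_combination
        (- 2 * a 1 * a 2 ^ 5 - 5 * a 1 ^ 2 * a 2 ^ 4 + 5 * a 1 ^ 4 * a 2 ^ 2 + 2 * a 1 ^ 5 * a 2 - 5 * a 0 * a 1 * a 2 ^ 4 - 6 * a 0 * a 1 ^ 2 * a 2 ^ 3 + 6 * a 0 * a 1 ^ 3 * a 2 ^ 2 + 5 * a 0 * a 1 ^ 4 * a 2 - 4 * a 0 ^ 2 * a 1 * a 2 ^ 3 + 4 * a 0 ^ 2 * a 1 ^ 3 * a 2 - 1 * a 0 ^ 3 * a 1 * a 2 ^ 2 + 1 * a 0 ^ 3 * a 1 ^ 2 * a 2) * (key 0 t1 t2 t3) +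
        (2 * a 0 * a 2 ^ 5 + 5 * a 0 * a 1 * a 2 ^ 4 + 4 * a 0 * a 1 ^ 2 * a 2 ^ 3 + 1 * a 0 * a 1 ^ 3 * a 2 ^ 2 + 5 * a 0 ^ 2 * a 2 ^ 4 + 6 * a 0 ^ 2 * a 1 * a 2 ^ 3 - 1 * a 0 ^ 2 * a 1 ^ 3 * a 2 - 6 * a 0 ^ 3 * a 1 * a 2 ^ 2 - 4 * a 0 ^ 3 * a 1 ^ 2 * a 2 - 5 * a 0 ^ 4 * a 2 ^ 2 - 5 * a 0 ^ 4 * a 1 * a 2 - 2 * a 0 ^ 5 * a 2) * (key 1 t1 t2 t3) +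
        (- 1 * a 0 * a 1 ^ 2 * a 2 ^ 3 - 4 * a 0 * a 1 ^ 3 * a 2 ^ 2 - 5 * a 0 * a 1 ^ 4 * a 2 - 2 * a 0 * a 1 ^ 5 + 1 * a 0 ^ 2 * a 1 * a 2 ^ 3 - 6 * a 0 ^ 2 * a 1 ^ 3 * a 2 - 5 * a 0 ^ 2 * a 1 ^ 4 + 4 * a 0 ^ 3 * a 1 * a 2 ^ 2 + 6 * a 0 ^ 3 * a 1 ^ 2 * a 2 + 5 * a 0 ^ 4 * a 1 * a 2 + 5 * a 0 ^ 4 * a 1 ^ 2 + 2 * a 0 ^ 5 * a 1) * (key 2 t1 t2 t3) +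
        (- 1 * a 0 * a 1 ^ 2 * a 2 ^ 3 + 1 * a 0 * a 1 ^ 3 * a 2 ^ 2 + 1 * a 0 ^ 2 * a 1 * a 2 ^ 3 - 1 * a 0 ^ 2 * a 1 ^ 3 * a 2 - 1 * a 0 ^ 3 * a 1 * a 2 ^ 2 + 1 * a 0 ^ 3 * a 1 ^ 2 * a 2) * (k3 t1 t2 t3)
  have hp : ∀ i j : Fin 4, i < j → s2 + a i + a j ≠ 0 := by
    intro i j hij hc
    exact hs2' i j hij (by linear_combination hc)
  have hPne : (s2 + a 0 + a 1) * (s2 + a 0 + a 2) * (s2 + a 0 + a 3) * (s2 + a 1 + a 2)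
      * (s2 + a 1 + a 3) * (s2 + a 2 + a 3) ≠ 0 :=
    mul_ne_zero (mul_ne_zero (mul_ne_zero (mul_ne_zero (mul_ne_zero
      (hp 0 1 (by decide)) (hp 0 2 (by decide))) (hp 0 3 (by decide)))
      (hp 1 2 (by decide))) (hp 1 3 (by decide))) (hp 2 3 (by decide))
  have hprod : (∏ p ∈ Finset.univ.filter (fun p : Fin 4 × Fin 4 => p.1 < p.2),
      (s2 + a p.1 + a p.2)) = (s2 + a 0 + a 1) * (s2 + a 0 + a 2) * (s2 + a 0 + a 3)
        * (s2 + a 1 + a 2) * (s2 + a 1 + a 3) * (s2 + a 2 + a 3) := by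
    rw [show (Finset.univ.filter (fun p : Fin 4 × Fin 4 => p.1 < p.2)) =
        ({((0 : Fin 4), (1 : Fin 4)), (0, 2), (0, 3), (1, 2), (1, 3), (2, 3)} :
          Finset (Fin 4 × Fin 4)) from by decide]
    simp [Finset.prod_insert, Finset.mem_insert]
    ring
  rw [hprod, eq_div_iff hPne]
  simp only [Crec]
  rw [h3]
  linear_combination
      (4 * s2 ^ 2) * (relIII s1 s2 s3) +
      (4 * s2 ^ 2 * s1 * (s1 - s2) - (1 * s2 ^ 3 - 2 * s1 * s2 ^ 2 + 2 * s1 ^ 2 * s2 - 1 * a 2 ^ 2 * s2 - 1 * a 1 * a 2 * s2 + 1 * a 1 * a 2 ^ 2 - 1 * a 1 ^ 2 * s2 + 1 * a 1 ^ 2 * a 2 - 1 * a 0 * a 2 * s2 + 1 * a 0 * a 2 ^ 2 - 1 * a 0 * a 1 * s2 + 2 * a 0 * a 1 * a 2 + 1 * a 0 * a 1 ^ 2 - 1 * a 0 ^ 2 * s2 + 1 * a 0 ^ 2 * a 2 + 1 * a 0 ^ 2 * a 1) * s2) * (relI s1 s2 s3) +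
      (1 * s2 ^ 3 - 2 * s1 * s2 ^ 2 + 2 * s1 ^ 2 * s2 - 1 * a 2 ^ 2 * s2 - 1 * a 1 * a 2 * s2 + 1 * a 1 * a 2 ^ 2 - 1 * a 1 ^ 2 * s2 + 1 * a 1 ^ 2 * a 2 - 1 * a 0 * a 2 * s2 + 1 * a 0 * a 2 ^ 2 - 1 * a 0 * a 1 * s2 + 2 * a 0 * a 1 * a 2 + 1 * a 0 * a 1 ^ 2 - 1 * a 0 ^ 2 * s2 + 1 * a 0 ^ 2 * a 2 + 1 * a 0 ^ 2 * a 1) * (relII s1 s2 s3) +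
      (-2 * s2 ^ 2) * (relI (s1 + 1) s2 s3) +
      (-2 * s2) * (relII (s1 + 1) s2 s3)
end

section
/- Assume (i), (ii) and (iii) below hold for F. Let a = (a_1,a_2,a_3,a_4) have a_1+a_2+a_3+a_4 = 0 with a_1,a_2,a_3,a_4 pairwise distinct, and let (s_1,s_2,s_3) ∈ ℂ³ satisfy s_3 ≠ a_k for all 1 ≤ k ≤ 4. Then F(a; s_1,s_2,s_3) = [B(s_3,s_2,s_1)·F(a; s_1,s_2,s_3+1) + F(a; s_1+1,s_2,s_3+1)] / Π_{k=1}^{4}(s_3−a_k). -/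
open Finset

/-- Proposition 3.3(a) of Stade–Trinh:
`T(s) = [B(s_3,s_2,s_1)·T(s_1,s_2,s_3+1) + T(s_1+1,s_2,s_3+1)] / ∏_{k=1}^4 (s_3−a_k)`. -/
theorem stmt8 (F : (Fin 4 → ℂ) → ℂ → ℂ → ℂ → ℂ)
    (hperm : PermInvariant F) (hrec : GL4Recurrence F) (hrefl : ReflInvariant F)
    (a : Fin 4 → ℂ) (hsum : a 0 + a 1 + a 2 + a 3 = 0) (hinj : Function.Injective a)
    (s1 s2 s3 : ℂ) (hs3 : ∀ k : Fin 4, s3 ≠ a k) :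
    F a s1 s2 s3 =
      (Brec s3 s2 s1 * F a s1 s2 (s3 + 1) + F a (s1 + 1) s2 (s3 + 1)) /
        ∏ k : Fin 4, (s3 - a k) := by
  have mk : ∀ k : Fin 4,
      (-s1 - a k) * (s1 - s2 - a k) * (s2 - s3 - a k) * (s3 - a k) * F a s1 s2 s3
        + (s2 - s3 - a k) * (s3 - a k) * F a (s1 + 1) s2 s3
        + (-s1 - a k) * (s3 - a k) * F a s1 (s2 + 1) s3
        + (-s1 - a k) * (s1 - s2 - a k) * F a s1 s2 (s3 + 1)
        + F a (s1 + 1) s2 (s3 + 1) = 0 := by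
    intro k
    have hsb : (a ∘ Equiv.swap 0 k) 0 + (a ∘ Equiv.swap 0 k) 1
        + (a ∘ Equiv.swap 0 k) 2 + (a ∘ Equiv.swap 0 k) 3 = 0 := by
      fin_cases k <;> simp [Equiv.swap_apply_def, Function.comp] <;> linear_combination hsum
    have h := hrec _ hsb s1 s2 s3
    have hk0 : (a ∘ Equiv.swap 0 k) 0 = a k := by simp
    rw [hk0, hperm (Equiv.swap 0 k) a hsum s1 s2 s3,
      hperm (Equiv.swap 0 k) a hsum (s1 + 1) s2 s3,
      hperm (Equiv.swap 0 k) a hsum s1 (s2 + 1) s3,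
      hperm (Equiv.swap 0 k) a hsum s1 s2 (s3 + 1),
      hperm (Equiv.swap 0 k) a hsum (s1 + 1) s2 (s3 + 1)] at h
    exact h
  have hne : ∀ i j : Fin 4, i ≠ j → a i - a j ≠ 0 := fun i j hij =>
    sub_ne_zero.mpr (fun h => hij (hinj h))
  have hprod : (∏ k : Fin 4, (s3 - a k)) ≠ 0 :=
    Finset.prod_ne_zero_iff.mpr fun k _ => sub_ne_zero.mpr (hs3 k)
  rw [eq_div_iff hprod]
  have h0 := mk 0
  have h1 := mk 1
  have h2 := mk 2
  have h3 := mk 3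
  have hV : (a 0 - a 1) * ((a 0 - a 2) * ((a 0 - a 3) * ((a 1 - a 2) * ((a 1 - a 3) * (a 2 - a 3))))) ≠ 0 := by
    repeat' apply mul_ne_zero
    all_goals apply hne <;> decide
  apply mul_left_cancel₀ hV
  rw [Fin.prod_univ_four, Brec]
  linear_combination
    (-((a 1 - a 2) * (a 1 - a 3) * (a 2 - a 3) * (s3 - a 1) * (s3 - a 2) * (s3 - a 3))) * h0
    + ((a 0 - a 2) * (a 0 - a 3) * (a 2 - a 3) * (s3 - a 0) * (s3 - a 2) * (s3 - a 3)) * h1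
    + (-((a 0 - a 1) * (a 0 - a 3) * (a 1 - a 3) * (s3 - a 0) * (s3 - a 1) * (s3 - a 3))) * h2
    + ((a 0 - a 1) * (a 0 - a 2) * (a 1 - a 2) * (s3 - a 0) * (s3 - a 1) * (s3 - a 2)) * h3
end

section
/- Assume (i), (ii) and (iii) below hold for F. Let a = (a_1,a_2,a_3,a_4) have a_1+a_2+a_3+a_4 = 0 with a_1,a_2,a_3,a_4 pairwise distinct, and let (s_1,s_2,s_3) ∈ ℂ³ satisfy s_3 ≠ a_k for all 1 ≤ k ≤ 4 and s_2 ≠ 0. Then F(a; s_1,s_2,s_3) = [C_{−a}(s_3,s_2)·F(a; s_1,s_2,s_3+1) − (1+s_2+s_3−s_1)·F(a; s_1,s_2+1,s_3+1)] / (2s_2·Π_{k=1}^{4}(s_3−a_k)), where C_{−a} denotes C_a with each a_k replaced by −a_k. -/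
open Finset

/-- Key algebraic elimination: combining the four recurrences at `(s1,s2,s3)` with
Lagrange weights `∏_{j≠k}(s3−a_j)/∏_{j≠k}(a_k−a_j)` and the four recurrences at
`(s1,s2,s3+1)` with weights `(a_k²−s2·a_k)/∏_{j≠k}(a_k−a_j)`. -/
lemma stmt9_key (A0 A1 A2 A3 s1 s2 s3 F000 F100 F010 F001 F101 F011 F002 F102 : ℂ)
    (hsum : A0 + A1 + A2 + A3 = 0)
    (h01 : A0 ≠ A1) (h02 : A0 ≠ A2) (h03 : A0 ≠ A3)
    (h12 : A1 ≠ A2) (h13 : A1 ≠ A3) (h23 : A2 ≠ A3)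
    (R0 : (-s1 - A0) * (s1 - s2 - A0) * (s2 - s3 - A0) * (s3 - A0) * F000
      + (s2 - s3 - A0) * (s3 - A0) * F100 + (-s1 - A0) * (s3 - A0) * F010
      + (-s1 - A0) * (s1 - s2 - A0) * F001 + F101 = 0)
    (R1 : (-s1 - A1) * (s1 - s2 - A1) * (s2 - s3 - A1) * (s3 - A1) * F000
      + (s2 - s3 - A1) * (s3 - A1) * F100 + (-s1 - A1) * (s3 - A1) * F010
      + (-s1 - A1) * (s1 - s2 - A1) * F001 + F101 = 0)
    (R2 : (-s1 - A2) * (s1 - s2 - A2) * (s2 - s3 - A2) * (s3 - A2) * F000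
      + (s2 - s3 - A2) * (s3 - A2) * F100 + (-s1 - A2) * (s3 - A2) * F010
      + (-s1 - A2) * (s1 - s2 - A2) * F001 + F101 = 0)
    (R3 : (-s1 - A3) * (s1 - s2 - A3) * (s2 - s3 - A3) * (s3 - A3) * F000
      + (s2 - s3 - A3) * (s3 - A3) * F100 + (-s1 - A3) * (s3 - A3) * F010
      + (-s1 - A3) * (s1 - s2 - A3) * F001 + F101 = 0)
    (S0 : (-s1 - A0) * (s1 - s2 - A0) * (s2 - (s3 + 1) - A0) * ((s3 + 1) - A0) * F001
      + (s2 - (s3 + 1) - A0) * ((s3 + 1) - A0) * F101 + (-s1 - A0) * ((s3 + 1) - A0) * F011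
      + (-s1 - A0) * (s1 - s2 - A0) * F002 + F102 = 0)
    (S1 : (-s1 - A1) * (s1 - s2 - A1) * (s2 - (s3 + 1) - A1) * ((s3 + 1) - A1) * F001
      + (s2 - (s3 + 1) - A1) * ((s3 + 1) - A1) * F101 + (-s1 - A1) * ((s3 + 1) - A1) * F011
      + (-s1 - A1) * (s1 - s2 - A1) * F002 + F102 = 0)
    (S2 : (-s1 - A2) * (s1 - s2 - A2) * (s2 - (s3 + 1) - A2) * ((s3 + 1) - A2) * F001
      + (s2 - (s3 + 1) - A2) * ((s3 + 1) - A2) * F101 + (-s1 - A2) * ((s3 + 1) - A2) * F011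
      + (-s1 - A2) * (s1 - s2 - A2) * F002 + F102 = 0)
    (S3 : (-s1 - A3) * (s1 - s2 - A3) * (s2 - (s3 + 1) - A3) * ((s3 + 1) - A3) * F001
      + (s2 - (s3 + 1) - A3) * ((s3 + 1) - A3) * F101 + (-s1 - A3) * ((s3 + 1) - A3) * F011
      + (-s1 - A3) * (s1 - s2 - A3) * F002 + F102 = 0) :
    2 * s2 * ((s3 - A0) * (s3 - A1) * (s3 - A2) * (s3 - A3)) * F000 =
      (s2 * (s3 ^ 2 + (s3 + s2) ^ 2) - (1 / 2) * s2 * (A0 ^ 2 + A1 ^ 2 + A2 ^ 2 + A3 ^ 2)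
          + (1 / 3) * (A0 ^ 3 + A1 ^ 3 + A2 ^ 3 + A3 ^ 3)) * F001
        - (1 + s2 + s3 - s1) * F011 := by
  have h3 : A3 = -A0 - A1 - A2 := by linear_combination hsum
  subst h3
  have hV : (A0 - A1) * (A0 - A2) * (A0 - (-A0 - A1 - A2)) * (A1 - A2)
      * (A1 - (-A0 - A1 - A2)) * (A2 - (-A0 - A1 - A2)) ≠ 0 := by
    refine mul_ne_zero (mul_ne_zero (mul_ne_zero (mul_ne_zero (mul_ne_zero ?_ ?_) ?_) ?_) ?_) ?_
      <;> exact sub_ne_zero.mpr ‹_›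
  apply mul_left_cancel₀ hV
  linear_combination
    (-2 * s2 * ((s3 - A1) * (s3 - A2) * (s3 - (-A0 - A1 - A2)))
      * ((A1 - A2) * (A1 - (-A0 - A1 - A2)) * (A2 - (-A0 - A1 - A2)))) * R0
    + (-2 * s2 * ((s3 - A0) * (s3 - A2) * (s3 - (-A0 - A1 - A2)))
      * (-((A0 - A2) * (A0 - (-A0 - A1 - A2)) * (A2 - (-A0 - A1 - A2))))) * R1
    + (-2 * s2 * ((s3 - A0) * (s3 - A1) * (s3 - (-A0 - A1 - A2)))
      * ((A0 - A1) * (A0 - (-A0 - A1 - A2)) * (A1 - (-A0 - A1 - A2)))) * R2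
    + (-2 * s2 * ((s3 - A0) * (s3 - A1) * (s3 - A2))
      * (-((A0 - A1) * (A0 - A2) * (A1 - A2)))) * R3
    + (-(A0 ^ 2 - s2 * A0)
      * ((A1 - A2) * (A1 - (-A0 - A1 - A2)) * (A2 - (-A0 - A1 - A2)))) * S0
    + (-(A1 ^ 2 - s2 * A1)
      * (-((A0 - A2) * (A0 - (-A0 - A1 - A2)) * (A2 - (-A0 - A1 - A2))))) * S1
    + (-(A2 ^ 2 - s2 * A2)
      * ((A0 - A1) * (A0 - (-A0 - A1 - A2)) * (A1 - (-A0 - A1 - A2)))) * S2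
    + (-((-A0 - A1 - A2) ^ 2 - s2 * (-A0 - A1 - A2))
      * (-((A0 - A1) * (A0 - A2) * (A1 - A2)))) * S3

/-- Proposition 3.3(b) of Stade–Trinh:
`T(s) = [C_{−a}(s_3,s_2)·T(s_1,s_2,s_3+1) − (1+s_2+s_3−s_1)·T(s_1,s_2+1,s_3+1)]
  / (2s_2 ∏_{k=1}^4 (s_3−a_k))`. -/
theorem stmt9 (F : (Fin 4 → ℂ) → ℂ → ℂ → ℂ → ℂ)
    (hperm : PermInvariant F) (hrec : GL4Recurrence F) (hrefl : ReflInvariant F)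
    (a : Fin 4 → ℂ) (hsum : a 0 + a 1 + a 2 + a 3 = 0) (hinj : Function.Injective a)
    (s1 s2 s3 : ℂ) (hs3 : ∀ k : Fin 4, s3 ≠ a k) (hs2 : s2 ≠ 0) :
    F a s1 s2 s3 =
      (Crec (fun i => -a i) s3 s2 * F a s1 s2 (s3 + 1)
          - (1 + s2 + s3 - s1) * F a s1 (s2 + 1) (s3 + 1)) /
        (2 * s2 * ∏ k : Fin 4, (s3 - a k)) := by
  have hrec' : ∀ k : Fin 4, ∀ u1 u2 u3 : ℂ,
      (-u1 - a k) * (u1 - u2 - a k) * (u2 - u3 - a k) * (u3 - a k) * F a u1 u2 u3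
        + (u2 - u3 - a k) * (u3 - a k) * F a (u1 + 1) u2 u3
        + (-u1 - a k) * (u3 - a k) * F a u1 (u2 + 1) u3
        + (-u1 - a k) * (u1 - u2 - a k) * F a u1 u2 (u3 + 1)
        + F a (u1 + 1) u2 (u3 + 1) = 0 := by
    intro k u1 u2 u3
    have hsum' : (a ∘ Equiv.swap 0 k) 0 + (a ∘ Equiv.swap 0 k) 1 + (a ∘ Equiv.swap 0 k) 2
        + (a ∘ Equiv.swap 0 k) 3 = 0 := by
      fin_cases k <;> simp [Equiv.swap_apply_def, Function.comp] <;> linear_combination hsum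
    have hσ := hrec (a ∘ Equiv.swap 0 k) hsum' u1 u2 u3
    simpa [hperm (Equiv.swap 0 k) a hsum, Equiv.swap_apply_left, Function.comp] using hσ
  have hd : ∀ i j : Fin 4, i ≠ j → a i ≠ a j := fun i j hij h => hij (hinj h)
  have key := stmt9_key (a 0) (a 1) (a 2) (a 3) s1 s2 s3
    (F a s1 s2 s3) (F a (s1 + 1) s2 s3) (F a s1 (s2 + 1) s3) (F a s1 s2 (s3 + 1))
    (F a (s1 + 1) s2 (s3 + 1)) (F a s1 (s2 + 1) (s3 + 1)) (F a s1 s2 (s3 + 1 + 1))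
    (F a (s1 + 1) s2 (s3 + 1 + 1)) hsum
    (hd 0 1 (by decide)) (hd 0 2 (by decide)) (hd 0 3 (by decide))
    (hd 1 2 (by decide)) (hd 1 3 (by decide)) (hd 2 3 (by decide))
    (hrec' 0 s1 s2 s3) (hrec' 1 s1 s2 s3) (hrec' 2 s1 s2 s3) (hrec' 3 s1 s2 s3)
    (hrec' 0 s1 s2 (s3 + 1)) (hrec' 1 s1 s2 (s3 + 1)) (hrec' 2 s1 s2 (s3 + 1))
    (hrec' 3 s1 s2 (s3 + 1))
  have hden : 2 * s2 * ∏ k : Fin 4, (s3 - a k) ≠ 0 := by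
    rw [Fin.prod_univ_four]
    refine mul_ne_zero (mul_ne_zero two_ne_zero hs2) ?_
    exact mul_ne_zero (mul_ne_zero (mul_ne_zero (sub_ne_zero.mpr (hs3 0))
      (sub_ne_zero.mpr (hs3 1))) (sub_ne_zero.mpr (hs3 2))) (sub_ne_zero.mpr (hs3 3))
  rw [eq_div_iff hden, Fin.prod_univ_four]
  simp only [Crec]
  linear_combination key
end

section
/- Let δ be a nonnegative integer and let b,c,d,e,f,g be complex numbers. Then (e+δ)(f+δ)(g−1)·p_δ(b,c,d;e,f,g) − b·c·d·p_δ(b+1,c+1,d+1;e+1,f+1,g+1) = (δ+1)·p_{δ+1}(b,c,d;e,f,g−1). -/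
open Finset

/-- The ascending Pochhammer symbol `(x)_k = x(x+1)⋯(x+k-1)`, with `(x)_0 = 1`. -/
noncomputable def poch (x : ℂ) (k : ℕ) : ℂ := ∏ i ∈ Finset.range k, (x + i)

/-- The polynomial `p_δ(b,c,d;e,f,g)` of Stade–Trinh, Lemma 4.2. -/
noncomputable def pdelta (δ : ℕ) (b c d e f g : ℂ) : ℂ :=
  ∑ κ ∈ Finset.range (δ + 1),
    (-1 : ℂ) ^ κ * poch b κ * poch c κ * poch d κ *
        poch (e + κ) (δ - κ) * poch (f + κ) (δ - κ) * poch (g + κ) (δ - κ) /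
      ((κ.factorial : ℂ) * ((δ - κ).factorial : ℂ))

lemma poch_succ (x : ℂ) (k : ℕ) : poch x (k + 1) = poch x k * (x + k) :=
  Finset.prod_range_succ _ _

lemma poch_succ' (x : ℂ) (k : ℕ) : poch x (k + 1) = x * poch (x + 1) k := by
  unfold poch
  rw [Finset.prod_range_succ', Nat.cast_zero, add_zero, mul_comm]
  congr 1
  refine Finset.prod_congr rfl fun i _ => ?_
  push_cast
  ring

/-- Summand of `pdelta`. -/
noncomputable def Aterm (δ : ℕ) (b c d e f g : ℂ) (κ : ℕ) : ℂ :=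
  (-1 : ℂ) ^ κ * poch b κ * poch c κ * poch d κ *
      poch (e + κ) (δ - κ) * poch (f + κ) (δ - κ) * poch (g + κ) (δ - κ) /
    ((κ.factorial : ℂ) * ((δ - κ).factorial : ℂ))

lemma pdelta_eq (δ : ℕ) (b c d e f g : ℂ) :
    pdelta δ b c d e f g = ∑ κ ∈ Finset.range (δ + 1), Aterm δ b c d e f g κ := rfl

/-- Auxiliary correction term. -/
noncomputable def Wterm (δ : ℕ) (b c d e f g : ℂ) (κ : ℕ) : ℂ :=
  (κ : ℂ) * ((-1 : ℂ) ^ κ * poch b κ * poch c κ * poch d κ *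
      poch (e + κ) (δ + 1 - κ) * poch (f + κ) (δ + 1 - κ) * poch (g + κ) (δ - κ) /
    ((κ.factorial : ℂ) * ((δ - κ).factorial : ℂ)))

lemma facC (k : ℕ) : ((k.factorial : ℂ)) ≠ 0 :=
  Nat.cast_ne_zero.mpr (Nat.factorial_ne_zero k)

set_option maxHeartbeats 1000000 in
lemma L1 (δ κ : ℕ) (h : κ ≤ δ) (b c d e f g : ℂ) :
    (e + δ) * (f + δ) * (g - 1) * Aterm δ b c d e f g κ
      = ((δ + 1 - κ : ℕ) : ℂ) * Aterm (δ + 1) b c d e f (g - 1) κ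
        - Wterm δ b c d e f g κ := by
  obtain ⟨m, rfl⟩ : ∃ m, δ = κ + m := ⟨δ - κ, by omega⟩
  unfold Aterm Wterm
  simp only [show κ + m - κ = m from by omega, show κ + m + 1 - κ = m + 1 from by omega]
  rw [poch_succ (e + κ) m, poch_succ (f + κ) m, poch_succ' (g - 1 + κ) m,
    show (g - 1 + (κ : ℂ)) + 1 = g + κ from by ring, Nat.factorial_succ]
  have hm : ((m + 1 : ℕ) : ℂ) ≠ 0 := Nat.cast_ne_zero.mpr (Nat.succ_ne_zero m)
  push_cast at hm ⊢
  have h1 := facC κ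
  have h2 := facC m
  field_simp
  ring

set_option maxHeartbeats 1000000 in
lemma L2 (δ κ : ℕ) (h : κ < δ) (b c d e f g : ℂ) :
    Wterm δ b c d e f g (κ + 1)
      + b * c * d * Aterm δ (b + 1) (c + 1) (d + 1) (e + 1) (f + 1) (g + 1) κ
      + ((κ : ℂ) + 1) * Aterm (δ + 1) b c d e f (g - 1) (κ + 1) = 0 := by
  obtain ⟨m, rfl⟩ : ∃ m, δ = κ + 1 + m := ⟨δ - (κ + 1), by omega⟩
  unfold Aterm Wterm
  simp only [show κ + 1 + m - (κ + 1) = m from by omega,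
    show κ + 1 + m + 1 - (κ + 1) = m + 1 from by omega,
    show κ + 1 + m - κ = m + 1 from by omega,
    show κ + 1 + m + 1 - (κ + 1 + 1) = m from by omega]
  rw [show e + 1 + (κ : ℂ) = e + (κ : ℂ) + 1 from by ring,
    show f + 1 + (κ : ℂ) = f + (κ : ℂ) + 1 from by ring,
    show g + 1 + (κ : ℂ) = g + (κ : ℂ) + 1 from by ring,
    show e + ((κ + 1 : ℕ) : ℂ) = e + (κ : ℂ) + 1 from by push_cast; ring,
    show f + ((κ + 1 : ℕ) : ℂ) = f + (κ : ℂ) + 1 from by push_cast; ring,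
    show g + ((κ + 1 : ℕ) : ℂ) = g + (κ : ℂ) + 1 from by push_cast; ring,
    show g - 1 + ((κ + 1 : ℕ) : ℂ) = g + (κ : ℂ) from by push_cast; ring,
    poch_succ' b κ, poch_succ' c κ, poch_succ' d κ,
    poch_succ (e + (κ : ℂ) + 1) m, poch_succ (f + (κ : ℂ) + 1) m,
    poch_succ (g + (κ : ℂ) + 1) m,
    poch_succ' (g + (κ : ℂ)) m, pow_succ, Nat.factorial_succ κ, Nat.factorial_succ m]
  have hk : ((κ + 1 : ℕ) : ℂ) ≠ 0 := Nat.cast_ne_zero.mpr (Nat.succ_ne_zero κ)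
  have hm : ((m + 1 : ℕ) : ℂ) ≠ 0 := Nat.cast_ne_zero.mpr (Nat.succ_ne_zero m)
  push_cast at hk hm ⊢
  have h1 := facC κ
  have h2 := facC m
  field_simp
  ring

set_option maxHeartbeats 1000000 in
lemma L3 (δ : ℕ) (b c d e f g : ℂ) :
    b * c * d * Aterm δ (b + 1) (c + 1) (d + 1) (e + 1) (f + 1) (g + 1) δ
      + ((δ : ℂ) + 1) * Aterm (δ + 1) b c d e f (g - 1) (δ + 1) = 0 := by
  unfold Aterm
  simp only [Nat.sub_self, show δ + 1 - (δ + 1) = 0 from by omega, poch,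
    Finset.prod_range_zero]
  rw [show (∏ i ∈ Finset.range (δ + 1), (b + (i : ℂ))) = poch b (δ + 1) from rfl,
    show (∏ i ∈ Finset.range (δ + 1), (c + (i : ℂ))) = poch c (δ + 1) from rfl,
    show (∏ i ∈ Finset.range (δ + 1), (d + (i : ℂ))) = poch d (δ + 1) from rfl,
    show (∏ i ∈ Finset.range δ, (b + 1 + (i : ℂ))) = poch (b + 1) δ from rfl,
    show (∏ i ∈ Finset.range δ, (c + 1 + (i : ℂ))) = poch (c + 1) δ from rfl,
    show (∏ i ∈ Finset.range δ, (d + 1 + (i : ℂ))) = poch (d + 1) δ from rfl,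
    poch_succ' b δ, poch_succ' c δ, poch_succ' d δ, pow_succ, Nat.factorial_succ δ]
  have hk : ((δ + 1 : ℕ) : ℂ) ≠ 0 := Nat.cast_ne_zero.mpr (Nat.succ_ne_zero δ)
  push_cast at hk ⊢
  have h1 := facC δ
  field_simp
  ring

/-- Lemma 4.2(a) of Stade–Trinh. -/
theorem pdelta_recur1 (δ : ℕ) (b c d e f g : ℂ) :
    (e + δ) * (f + δ) * (g - 1) * pdelta δ b c d e f g
        - b * c * d * pdelta δ (b + 1) (c + 1) (d + 1) (e + 1) (f + 1) (g + 1)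
      = ((δ : ℂ) + 1) * pdelta (δ + 1) b c d e f (g - 1) := by
  rw [pdelta_eq, pdelta_eq, pdelta_eq, Finset.mul_sum, Finset.mul_sum, Finset.mul_sum]
  rw [Finset.sum_congr rfl fun κ hκ =>
    L1 δ κ (Nat.lt_succ_iff.mp (Finset.mem_range.mp hκ)) b c d e f g]
  rw [Finset.sum_sub_distrib]
  have hR : (∑ κ ∈ Finset.range (δ + 1 + 1), ((δ : ℂ) + 1) * Aterm (δ + 1) b c d e f (g - 1) κ)
      = (∑ κ ∈ Finset.range (δ + 1), ((δ + 1 - κ : ℕ) : ℂ) * Aterm (δ + 1) b c d e f (g - 1) κ)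
        + ∑ κ ∈ Finset.range (δ + 1), ((κ : ℂ) + 1) * Aterm (δ + 1) b c d e f (g - 1) (κ + 1) := by
    have hsp : ∀ κ ∈ Finset.range (δ + 1 + 1),
        ((δ : ℂ) + 1) * Aterm (δ + 1) b c d e f (g - 1) κ
          = ((δ + 1 - κ : ℕ) : ℂ) * Aterm (δ + 1) b c d e f (g - 1) κ
            + (κ : ℂ) * Aterm (δ + 1) b c d e f (g - 1) κ := by
      intro κ hκ
      have hk : κ ≤ δ + 1 := Nat.lt_succ_iff.mp (Finset.mem_range.mp hκ)
      rw [Nat.cast_sub hk]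
      push_cast
      ring
    rw [Finset.sum_congr rfl hsp, Finset.sum_add_distrib]
    congr 1
    · rw [Finset.sum_range_succ]
      simp
    · rw [Finset.sum_range_succ']
      push_cast
      simp
  rw [hR]
  have hW0 : (∑ κ ∈ Finset.range (δ + 1), Wterm δ b c d e f g κ)
      = ∑ κ ∈ Finset.range δ, Wterm δ b c d e f g (κ + 1) := by
    rw [Finset.sum_range_succ']
    simp [Wterm]
  have key : (∑ κ ∈ Finset.range (δ + 1),
        (b * c * d * Aterm δ (b + 1) (c + 1) (d + 1) (e + 1) (f + 1) (g + 1) κ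
          + ((κ : ℂ) + 1) * Aterm (δ + 1) b c d e f (g - 1) (κ + 1)))
      = - ∑ κ ∈ Finset.range δ, Wterm δ b c d e f g (κ + 1) := by
    rw [Finset.sum_range_succ]
    rw [Finset.sum_congr rfl fun κ hκ =>
      (show b * c * d * Aterm δ (b + 1) (c + 1) (d + 1) (e + 1) (f + 1) (g + 1) κ
          + ((κ : ℂ) + 1) * Aterm (δ + 1) b c d e f (g - 1) (κ + 1)
          = - Wterm δ b c d e f g (κ + 1) from by
        linear_combination L2 δ κ (Finset.mem_range.mp hκ) b c d e f g)]
    rw [Finset.sum_neg_distrib]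
    linear_combination L3 δ b c d e f g
  have hsplit2 : (∑ κ ∈ Finset.range (δ + 1),
        (b * c * d * Aterm δ (b + 1) (c + 1) (d + 1) (e + 1) (f + 1) (g + 1) κ
          + ((κ : ℂ) + 1) * Aterm (δ + 1) b c d e f (g - 1) (κ + 1)))
      = (∑ κ ∈ Finset.range (δ + 1),
          b * c * d * Aterm δ (b + 1) (c + 1) (d + 1) (e + 1) (f + 1) (g + 1) κ)
        + ∑ κ ∈ Finset.range (δ + 1), ((κ : ℂ) + 1) * Aterm (δ + 1) b c d e f (g - 1) (κ + 1) :=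
    Finset.sum_add_distrib
  linear_combination (-1 : ℂ) * hW0 - key + hsplit2
end

section
/- Let δ and γ be nonnegative integers with 0 ≤ γ ≤ δ, and let c,d,e,f,g be complex numbers. Then p_δ(−γ,c,d;e,f,g) = (e+γ)_{δ−γ}·(f+γ)_{δ−γ}·(g+γ)_{δ−γ}·Σ_{κ=0}^{γ} (−1)^κ (−γ)_κ (c)_κ (d)_κ (e+κ)_{γ−κ} (f+κ)_{γ−κ} (g+κ)_{γ−κ} / (κ!·(δ−κ)!). In particular, if any of the first three arguments of p_δ equals −γ with 0 ≤ γ ≤ δ, then p_δ(b,c,d;e,f,g) is divisible by (e+γ)_{δ−γ}(f+γ)_{δ−γ}(g+γ)_{δ−γ}. -/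
open Finset

lemma poch_add (x : ℂ) (m n : ℕ) : poch x (m + n) = poch x m * poch (x + m) n := by
  unfold poch
  rw [Finset.prod_range_add]
  congr 1
  apply Finset.prod_congr rfl
  intro i _
  push_cast
  ring

lemma poch_neg_nat_eq_zero {γ κ : ℕ} (h : γ < κ) : poch (-(γ : ℂ)) κ = 0 := by
  unfold poch
  apply Finset.prod_eq_zero (Finset.mem_range.mpr h)
  simp

lemma pdelta_swap12 (δ : ℕ) (b c d e f g : ℂ) :
    pdelta δ b c d e f g = pdelta δ c b d e f g := by
  unfold pdelta; apply Finset.sum_congr rfl; intros; ring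

lemma pdelta_swap13 (δ : ℕ) (b c d e f g : ℂ) :
    pdelta δ b c d e f g = pdelta δ d c b e f g := by
  unfold pdelta; apply Finset.sum_congr rfl; intros; ring

lemma pdelta_neg (δ γ : ℕ) (hγ : γ ≤ δ) (c d e f g : ℂ) :
    pdelta δ (-(γ : ℂ)) c d e f g =
        poch (e + γ) (δ - γ) * poch (f + γ) (δ - γ) * poch (g + γ) (δ - γ) *
          ∑ κ ∈ Finset.range (γ + 1),
            (-1 : ℂ) ^ κ * poch (-(γ : ℂ)) κ * poch c κ * poch d κ *
                poch (e + κ) (γ - κ) * poch (f + κ) (γ - κ) * poch (g + κ) (γ - κ) /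
              ((κ.factorial : ℂ) * ((δ - κ).factorial : ℂ)) := by
  unfold pdelta
  rw [Finset.mul_sum]
  rw [← Finset.sum_subset (Finset.range_subset_range.mpr (by omega : γ + 1 ≤ δ + 1))]
  · apply Finset.sum_congr rfl
    intro κ hκ
    rw [Finset.mem_range] at hκ
    have hκγ : κ ≤ γ := by omega
    have hsplit : δ - κ = (γ - κ) + (δ - γ) := by omega
    have hcast : ((γ - κ : ℕ) : ℂ) = (γ : ℂ) - κ := by
      push_cast [Nat.cast_sub hκγ]; ring
    have he : e + κ + ((γ - κ : ℕ) : ℂ) = e + γ := by rw [hcast]; ring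
    have hf : f + κ + ((γ - κ : ℕ) : ℂ) = f + γ := by rw [hcast]; ring
    have hg : g + κ + ((γ - κ : ℕ) : ℂ) = g + γ := by rw [hcast]; ring
    rw [hsplit, poch_add (e + κ), poch_add (f + κ), poch_add (g + κ), he, hf, hg]
    ring
  · intro κ hκ hκ'
    rw [Finset.mem_range] at hκ hκ'
    have : γ < κ := by omega
    rw [poch_neg_nat_eq_zero this]
    ring

/-- Lemma 4.2(c) of Stade–Trinh: if the first argument of `p_δ` is `−γ` with
`0 ≤ γ ≤ δ`, then `p_δ` factors as stated; in particular, if any of the first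
three arguments equals `−γ`, then `p_δ(b,c,d;e,f,g)` is divisible by
`(e+γ)_{δ−γ}(f+γ)_{δ−γ}(g+γ)_{δ−γ}`. -/
theorem pdelta_divisible (δ γ : ℕ) (hγ : γ ≤ δ) (c d e f g : ℂ) :
    (pdelta δ (-(γ : ℂ)) c d e f g =
        poch (e + γ) (δ - γ) * poch (f + γ) (δ - γ) * poch (g + γ) (δ - γ) *
          ∑ κ ∈ Finset.range (γ + 1),
            (-1 : ℂ) ^ κ * poch (-(γ : ℂ)) κ * poch c κ * poch d κ *
                poch (e + κ) (γ - κ) * poch (f + κ) (γ - κ) * poch (g + κ) (γ - κ) /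
              ((κ.factorial : ℂ) * ((δ - κ).factorial : ℂ)))
    ∧ ∀ b : ℂ, (b = -(γ : ℂ) ∨ c = -(γ : ℂ) ∨ d = -(γ : ℂ)) →
        ∃ Q : ℂ, pdelta δ b c d e f g =
          poch (e + γ) (δ - γ) * poch (f + γ) (δ - γ) * poch (g + γ) (δ - γ) * Q := by
  constructor
  · exact pdelta_neg δ γ hγ c d e f g
  · rintro b (rfl | rfl | rfl)
    · exact ⟨_, pdelta_neg δ γ hγ c d e f g⟩
    · exact ⟨_, (pdelta_swap12 δ b _ d e f g).trans (pdelta_neg δ γ hγ b d e f g)⟩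
    · exact ⟨_, (pdelta_swap13 δ b c _ e f g).trans (pdelta_neg δ γ hγ c b e f g)⟩
end

section
/- Let δ_1, δ_2 be nonnegative integers. There exists a polynomial f in the five variables (s_3, a_1, a_2, a_3, a_4), of total degree at most 2δ_1+δ_2, such that for all complex numbers a_1,a_2,a_3,a_4 with a_1+a_2+a_3+a_4 = 0 and with a_2−a_1 ∉ ℤ and a_3−a_1 ∉ ℤ, and for all s_3 ∈ ℂ: ((−1)^{δ_1}/δ_1!)·Γ(a_2−a_1−δ_2)·Γ(a_3−a_1−δ_2)·p_{δ_2}(−δ_1, a_2−a_4−δ_2, s_3−a_3; 1+a_1−a_3, a_2−a_1−δ_1−δ_2, s_3−a_4−δ_2) = Γ(a_2−a_1−δ_1)·Γ(a_3−a_1−δ_1)·f(s_3, a_1, a_2, a_3, a_4). (This is the polynomial factorization, with degree bound 2δ_1+δ_2, of the double residue of the GL(4) Whittaker Mellin transform T_{4,a}(s) at s_1 = −a_1−δ_1 and s_2 = −a_1−a_4−δ_2.) -/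
open Finset

/-!
For `κ ≤ δ₁`, put `x = a₂ - a₁`, `y = a₃ - a₁` and `z = x - δ₁ - δ₂ + κ`. Writing
`Γ(x - δ₂) = Γ(z) (z)_{δ₁-κ}` and `Γ(x - δ₁) = Γ(z) (z)_{δ₂-κ}` gives
`Γ(x - δ₂) (z)_{δ₂-κ} = Γ(x - δ₁) (z)_{δ₁-κ}`, while the reflection
`(1 - y + κ)_{δ₂-κ} = (-1)^{δ₂-κ} (y - δ₂)_{δ₂-κ}` turns `Γ(y - δ₂) (1 - y + κ)_{δ₂-κ}` into
`±Γ(y - κ) = ±Γ(y - δ₁) (y - δ₁)_{δ₁-κ}`. So the `κ`-th summand of the left-hand side is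
`Γ(x - δ₁) Γ(y - δ₁)` times a polynomial of degree `2δ₁ + δ₂ - κ`; the summands with `κ > δ₁`
vanish because of the factor `(-δ₁)_κ`. The hypotheses `x, y ∉ ℤ` keep every `Γ`-argument
away from the poles.
-/

open MvPolynomial Complex

lemma poch_eq_eval_ascPochhammer (x : ℂ) (k : ℕ) : poch x k = (ascPochhammer ℂ k).eval x := by
  induction k with
  | zero => simp [poch]
  | succ k ih => rw [poch, prod_range_succ, ← poch, ih, ascPochhammer_succ_eval]

lemma poch_neg_natCast_of_lt {n k : ℕ} (h : n < k) : poch (-n) k = 0 := by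
  rw [poch_eq_eval_ascPochhammer, ascPochhammer_eval_neg_coe_nat_of_lt h]

lemma poch_one_sub_sub (u : ℂ) (m : ℕ) : poch (1 - u - m) m = (-1) ^ m * poch u m := by
  have h := ascPochhammer_eval_neg_eq_descPochhammer ℂ (u + m - 1) m
  rw [descPochhammer_eval_eq_ascPochhammer, show u + m - 1 - m + 1 = u by ring,
    show -(u + m - 1) = 1 - u - m by ring] at h
  simpa only [poch_eq_eval_ascPochhammer] using h

lemma Gamma_add_natCast {z : ℂ} (hz : ∀ k : ℕ, z ≠ -k) (n : ℕ) :
    Gamma (z + n) = Gamma z * poch z n := by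
  rw [poch_eq_eval_ascPochhammer, ← Gamma_add_nat_div_Gamma_eq z hz,
    mul_div_cancel₀ _ (Gamma_ne_zero hz)]

lemma Gamma_add_natCast_mul_poch_comm {z : ℂ} (hz : ∀ k : ℕ, z ≠ -k) (m n : ℕ) :
    Gamma (z + m) * poch z n = Gamma (z + n) * poch z m := by
  rw [Gamma_add_natCast hz, Gamma_add_natCast hz]
  ring

lemma Gamma_mul_poch_one_sub_sub {u : ℂ} (hu : ∀ k : ℕ, u ≠ -k) (m : ℕ) :
    Gamma u * poch (1 - u - m) m = (-1) ^ m * Gamma (u + m) := by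
  rw [poch_one_sub_sub, Gamma_add_natCast hu]
  ring

section GammaFactors

variable {δ1 δ2 κ : ℕ}

lemma Gamma_sub_mul_poch_swap {x : ℂ} (hx : ∀ m : ℤ, x ≠ m) (h1 : κ ≤ δ1) (h2 : κ ≤ δ2) :
    Gamma (x - δ2) * poch (x - δ1 - δ2 + κ) (δ2 - κ)
      = Gamma (x - δ1) * poch (x - δ1 - δ2 + κ) (δ1 - κ) := by
  have hz : ∀ k : ℕ, x - δ1 - δ2 + κ ≠ -k := fun k h =>
    hx (δ1 + δ2 - κ - k) (by push_cast; linear_combination h)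
  have h := Gamma_add_natCast_mul_poch_comm hz (δ1 - κ) (δ2 - κ)
  rwa [Nat.cast_sub h1, Nat.cast_sub h2, show x - δ1 - δ2 + κ + (δ1 - κ) = x - δ2 by ring,
    show x - δ1 - δ2 + κ + (δ2 - κ) = x - δ1 by ring] at h

lemma Gamma_sub_mul_poch_reflect {y : ℂ} (hy : ∀ m : ℤ, y ≠ m) (h1 : κ ≤ δ1) (h2 : κ ≤ δ2) :
    Gamma (y - δ2) * poch (1 - y + κ) (δ2 - κ)
      = (-1) ^ (δ2 - κ) * (Gamma (y - δ1) * poch (y - δ1) (δ1 - κ)) := by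
  have hu : ∀ k : ℕ, y - δ2 ≠ -k := fun k h => hy (δ2 - k) (by push_cast; linear_combination h)
  have hw : ∀ k : ℕ, y - δ1 ≠ -k := fun k h => hy (δ1 - k) (by push_cast; linear_combination h)
  have h := Gamma_mul_poch_one_sub_sub hu (δ2 - κ)
  rw [← Gamma_add_natCast hw, Nat.cast_sub h1]
  rwa [Nat.cast_sub h2, show 1 - (y - δ2) - (δ2 - κ) = 1 - y + κ by ring,
    show y - δ2 + (δ2 - κ) = y - δ1 + (δ1 - κ) by ring] at h

lemma Gamma_mul_Gamma_mul_poch_mul_poch {x y : ℂ} (hx : ∀ m : ℤ, x ≠ m) (hy : ∀ m : ℤ, y ≠ m)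
    (h1 : κ ≤ δ1) (h2 : κ ≤ δ2) :
    Gamma (x - δ2) * Gamma (y - δ2) *
        (poch (1 - y + κ) (δ2 - κ) * poch (x - δ1 - δ2 + κ) (δ2 - κ))
      = (-1) ^ (δ2 - κ) * Gamma (x - δ1) * Gamma (y - δ1) *
          (poch (y - δ1) (δ1 - κ) * poch (x - δ1 - δ2 + κ) (δ1 - κ)) :=
  calc _ = (Gamma (x - δ2) * poch (x - δ1 - δ2 + κ) (δ2 - κ)) *
          (Gamma (y - δ2) * poch (1 - y + κ) (δ2 - κ)) := by ring
    _ = _ := by rw [Gamma_sub_mul_poch_swap hx h1 h2, Gamma_sub_mul_poch_reflect hy h1 h2]; ring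

end GammaFactors

section PolynomialPochhammer

variable {σ : Type*}

noncomputable def mvPoch (P : MvPolynomial σ ℂ) (k : ℕ) : MvPolynomial σ ℂ :=
  ∏ i ∈ range k, (P + C (i : ℂ))

lemma eval_mvPoch (v : σ → ℂ) (P : MvPolynomial σ ℂ) (k : ℕ) :
    eval v (mvPoch P k) = poch (eval v P) k := by
  simp [mvPoch, poch]

lemma totalDegree_add_C_le (P : MvPolynomial σ ℂ) (c : ℂ) :
    (P + C c).totalDegree ≤ P.totalDegree :=
  (totalDegree_add _ _).trans_eq <| by rw [totalDegree_C, Nat.max_zero]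

lemma totalDegree_X_sub_X_le (i j : σ) : (X i - X j : MvPolynomial σ ℂ).totalDegree ≤ 1 :=
  (totalDegree_sub _ _).trans <| by simp [totalDegree_X]

lemma totalDegree_mvPoch_le {P : MvPolynomial σ ℂ} (hP : P.totalDegree ≤ 1) (k : ℕ) :
    (mvPoch P k).totalDegree ≤ k :=
  (totalDegree_finsetProd _ _).trans <| by
    simpa using sum_le_sum fun i (_ : i ∈ range k) => (totalDegree_add_C_le P i).trans hP

end PolynomialPochhammer

/-- The sign `(-1)^(δ₂-κ)` comes from the reflection of `(1 - y + κ)_{δ₂-κ}`. -/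
noncomputable def residueCoeff (δ1 δ2 κ : ℕ) : ℂ :=
  (-1) ^ δ1 / δ1.factorial *
    ((-1) ^ κ * (-1) ^ (δ2 - κ) * poch (-(δ1 : ℂ)) κ / (κ.factorial * (δ2 - κ).factorial))

/-- The polynomial `f`, in the variables `(s₃, a₁, a₂, a₃, a₄) = (X 0, …, X 4)`. -/
noncomputable def residuePoly (δ1 δ2 : ℕ) : MvPolynomial (Fin 5) ℂ :=
  ∑ κ ∈ range (δ2 + 1),
    C (residueCoeff δ1 δ2 κ) * mvPoch (X 2 - X 4 - C (δ2 : ℂ)) κ * mvPoch (X 0 - X 3) κ *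
      mvPoch (X 3 - X 1 - C (δ1 : ℂ)) (δ1 - κ) *
      mvPoch (X 2 - X 1 - C (δ1 : ℂ) - C (δ2 : ℂ) + C (κ : ℂ)) (δ1 - κ) *
      mvPoch (X 0 - X 4 - C (δ2 : ℂ) + C (κ : ℂ)) (δ2 - κ)

lemma totalDegree_residuePoly_le (δ1 δ2 : ℕ) :
    (residuePoly δ1 δ2).totalDegree ≤ 2 * δ1 + δ2 := by
  refine totalDegree_finsetSum_le fun κ _ => ?_
  rcases le_or_gt κ δ1 with hκ | hκ
  · have hmul {p q : MvPolynomial (Fin 5) ℂ} {m n : ℕ} (hp : p.totalDegree ≤ m)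
        (hq : q.totalDegree ≤ n) : (p * q).totalDegree ≤ m + n :=
      (totalDegree_mul _ _).trans (add_le_add hp hq)
    have hsubC {i j : Fin 5} (c : ℂ) : (X i - X j - C c).totalDegree ≤ 1 :=
      (totalDegree_sub_C_le _ _).trans (totalDegree_X_sub_X_le i j)
    calc _ ≤ 0 + κ + κ + (δ1 - κ) + (δ1 - κ) + (δ2 - κ) :=
          hmul (hmul (hmul (hmul (hmul (totalDegree_C _).le
            (totalDegree_mvPoch_le (hsubC _) κ))
            (totalDegree_mvPoch_le (totalDegree_X_sub_X_le _ _) κ))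
            (totalDegree_mvPoch_le (hsubC _) (δ1 - κ)))
            (totalDegree_mvPoch_le ((totalDegree_add_C_le _ _).trans
              ((totalDegree_sub_C_le _ _).trans (hsubC _))) (δ1 - κ)))
            (totalDegree_mvPoch_le ((totalDegree_add_C_le _ _).trans (hsubC _)) (δ2 - κ))
      _ ≤ 2 * δ1 + δ2 := by omega
  · simp [residueCoeff, poch_neg_natCast_of_lt hκ]

/-- Proposition 4.4(a) of Stade–Trinh (polynomial factorization with degree
bound `2δ_1 + δ_2` for the double residue of `T_{4,a}(s)` at
`s_1 = −a_1−δ_1`, `s_2 = −a_1−a_4−δ_2`). -/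
theorem double_residue_s1_s2 (δ1 δ2 : ℕ) :
    ∃ f : MvPolynomial (Fin 5) ℂ, f.totalDegree ≤ 2 * δ1 + δ2 ∧
      ∀ a1 a2 a3 a4 : ℂ, a1 + a2 + a3 + a4 = 0 →
        (∀ z : ℤ, a2 - a1 ≠ (z : ℂ)) → (∀ z : ℤ, a3 - a1 ≠ (z : ℂ)) →
        ∀ s3 : ℂ,
          ((-1 : ℂ) ^ δ1 / (δ1.factorial : ℂ)) *
              Complex.Gamma (a2 - a1 - δ2) * Complex.Gamma (a3 - a1 - δ2) *
              pdelta δ2 (-(δ1 : ℂ)) (a2 - a4 - δ2) (s3 - a3)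
                (1 + a1 - a3) (a2 - a1 - δ1 - δ2) (s3 - a4 - δ2)
            = Complex.Gamma (a2 - a1 - δ1) * Complex.Gamma (a3 - a1 - δ1) *
                MvPolynomial.eval ![s3, a1, a2, a3, a4] f := by
  refine ⟨residuePoly δ1 δ2, totalDegree_residuePoly_le δ1 δ2,
    fun a1 a2 a3 a4 _ hx hy s3 => ?_⟩
  simp only [pdelta, residuePoly, residueCoeff, mul_sum, map_sum, map_mul, map_add, map_sub,
    eval_C, eval_X, eval_mvPoch, Matrix.cons_val_zero, Matrix.cons_val_one, Matrix.cons_val_two,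
    Matrix.cons_val_three, Matrix.cons_val_four, Matrix.head_cons, Matrix.tail_cons]
  refine sum_congr rfl fun κ hκ => ?_
  have hκ2 : κ ≤ δ2 := Nat.lt_succ_iff.mp (mem_range.mp hκ)
  rcases le_or_gt κ δ1 with hκ1 | hκ1
  · rw [show 1 + a1 - a3 = 1 - (a3 - a1) by ring]
    linear_combination ((-1) ^ δ1 / δ1.factorial * (-1) ^ κ * poch (-(δ1 : ℂ)) κ *
        poch (a2 - a4 - δ2) κ * poch (s3 - a3) κ * poch (s3 - a4 - δ2 + κ) (δ2 - κ) /
        (κ.factorial * (δ2 - κ).factorial)) *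
      Gamma_mul_Gamma_mul_poch_mul_poch hx hy hκ1 hκ2
  · simp [poch_neg_natCast_of_lt hκ1]
end
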